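/- arXiv:1103.0079 — 8 statements merged into one kernel-verified Lean document; each statement's English description precedes it below -/
import Mathlib

section
/- Let G be a finite connected simple graph with n vertices and m edges, all of whose vertices have degree at least 1. Then for every complex number λ, (λ² − 1)^n · det(λ·I_{2m} − U) = (λ² − 1)^m · det((λ² + 1)·I_n − 2λ·T(G)), where I_{2m} is the identity matrix indexed by the darts of G and I_n the identity matrix indexed by the vertices. (This is the first equality of Theorem 4.1, with the factor (λ²−1)^{m−n} cleared of negative exponents.) -/
open Matrix SimpleGraph

/-- The matrix `T(G)`: `T u v = 1 / deg u` if `(u,v)` is a dart of `G`, else `0`. -/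
noncomputable def quantumT {V : Type*} [Fintype V] (G : SimpleGraph V)
    [DecidableRel G.Adj] : Matrix V V ℂ :=
  fun u v => if G.Adj u v then (1 : ℂ) / (G.degree u : ℂ) else 0

/-- The transition matrix `U` of the discrete-time quantum walk on `G`, indexed by darts:
`U e f = 2 / deg (t f)` if `t f = o e` and `f ≠ e⁻¹`, `U e f = 2 / deg (t f) - 1` if
`f = e⁻¹`, and `0` otherwise. -/
noncomputable def quantumU {V : Type*} [Fintype V] (G : SimpleGraph V)
    [DecidableRel G.Adj] [DecidableEq V] : Matrix G.Dart G.Dart ℂ :=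
  fun e f =>
    if f.toProd.2 = e.toProd.1 ∧ f ≠ e.symm then (2 : ℂ) / (G.degree f.toProd.2 : ℂ)
    else if f = e.symm then (2 : ℂ) / (G.degree f.toProd.2 : ℂ) - 1
    else 0

/-!
Write `C` for the dart-origin incidence matrix, `D` for the terminus incidence matrix weighted by
`2 / deg`, and `S` for the dart-reversal involution, so that `U = C D - S`, `D C = 2 T` and
`D S C = 2 I`. Since `S² = 1`, `(λ - U)(λ - S) = (λ² - 1) - C (λ D - D S)`, and the
Weinstein–Aronszajn identity moves the product to the vertex side, where
`(λ² - 1) - (λ D - D S) C = (λ² + 1) - 2 λ T`. Pairing each dart with its reverse makes `λ - S`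
block diagonal with `m` blocks `!![λ, -1; -1, λ]`, so `det (λ - S) = (λ² - 1)^m`, which cancels
when `λ² ≠ 1`; the two remaining values of `λ` follow by continuity.
-/

theorem Matrix.pow_mul_det_smul_one_sub_mul_comm {R m n : Type*} [CommRing R]
    [Fintype m] [Fintype n] [DecidableEq m] [DecidableEq n]
    (A : Matrix m n R) (B : Matrix n m R) (t : R) :
    t ^ Fintype.card n * (t • (1 : Matrix m m R) - A * B).det
      = t ^ Fintype.card m * (t • (1 : Matrix n n R) - B * A).det := by
  simpa [eval_charpoly, smul_one_eq_diagonal] using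
    congrArg (Polynomial.eval t) (charpoly_mul_comm' A B)

theorem Matrix.det_smul_one_sub_of_pairing {R ι κ : Type*} [CommRing R]
    [Fintype ι] [DecidableEq ι] [Fintype κ] [DecidableEq κ]
    (ψ : Bool × κ ≃ ι) (σ : ι → ι) (hσ : ∀ b x, σ (ψ (b, x)) = ψ (!b, x)) (t : R) :
    (t • (1 : Matrix ι ι R) - of fun i j => if σ i = j then 1 else 0).det
      = (t ^ 2 - 1) ^ Fintype.card κ := by
  set B : Matrix Bool Bool R := of fun b c => if b = c then t else -1
  have hblock : (t • (1 : Matrix ι ι R) - of fun i j => if σ i = j then 1 else 0).submatrix ψ ψ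
      = blockDiagonal fun _ : κ => B := by
    ext ⟨b, x⟩ ⟨c, y⟩
    by_cases hxy : x = y <;> cases b <;> cases c <;>
      simp [B, blockDiagonal_apply, hσ, ψ.injective.eq_iff, hxy, eq_comm]
  have hB : B.det = t ^ 2 - 1 := by
    rw [← det_submatrix_equiv_self finTwoEquiv, det_fin_two]
    simp [B, finTwoEquiv, sq]
  rw [← det_submatrix_equiv_self ψ, hblock, det_blockDiagonal, hB, Finset.prod_const,
    Finset.card_univ]

namespace SimpleGraph

variable {V : Type*} (G : SimpleGraph V)

theorem exists_dart_edge_eq {e : Sym2 V} (he : e ∈ G.edgeSet) : ∃ d : G.Dart, d.edge = e := by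
  induction e using Sym2.ind with
  | _ u v => exact ⟨⟨(u, v), he⟩, rfl⟩

noncomputable def orientedDart (p : Bool × G.edgeSet) : G.Dart :=
  let d := (G.exists_dart_edge_eq p.2.2).choose
  if p.1 then d else d.symm

@[simp]
theorem orientedDart_edge (p : Bool × G.edgeSet) : (G.orientedDart p).edge = p.2 := by
  have hd := (G.exists_dart_edge_eq p.2.2).choose_spec
  unfold orientedDart
  split_ifs <;> simp [hd]

theorem orientedDart_symm (b : Bool) (e : G.edgeSet) :
    (G.orientedDart (b, e)).symm = G.orientedDart (!b, e) := by
  cases b <;> simp [orientedDart]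

theorem orientedDart_injective : Function.Injective G.orientedDart := by
  rintro ⟨b, e⟩ ⟨c, f⟩ h
  have hef : e = f := Subtype.ext (by simpa using congrArg Dart.edge h)
  subst hef
  cases b <;> cases c <;> simp_all [orientedDart, Dart.symm_ne, (Dart.symm_ne _).symm]

variable [Fintype V] [DecidableRel G.Adj]

noncomputable def orientedDartEquiv : Bool × G.edgeSet ≃ G.Dart :=
  Equiv.ofBijective G.orientedDart <|
    (Fintype.bijective_iff_injective_and_card _).2
      ⟨G.orientedDart_injective, by
        rw [Fintype.card_prod, Fintype.card_bool, dart_card_eq_twice_card_edges, edgeFinset_card]⟩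

variable [DecidableEq V]

def dartOriginMatrix : Matrix G.Dart V ℂ := of fun e v => if e.fst = v then 1 else 0

noncomputable def dartTerminusMatrix : Matrix V G.Dart ℂ :=
  of fun v f => if f.snd = v then 2 / (G.degree v : ℂ) else 0

def dartReversalMatrix : Matrix G.Dart G.Dart ℂ := of fun e f => if e.symm = f then 1 else 0

theorem dartReversalMatrix_mul_self : G.dartReversalMatrix * G.dartReversalMatrix = 1 := by
  ext e f
  simp only [dartReversalMatrix, mul_apply, of_apply, ite_mul, one_mul, zero_mul,
    Finset.sum_ite_eq, Finset.mem_univ, if_true, Dart.symm_symm, one_apply]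

theorem quantumU_eq_origin_mul_terminus_sub_reversal :
    quantumU G = G.dartOriginMatrix * G.dartTerminusMatrix - G.dartReversalMatrix := by
  ext e f
  simp only [quantumU, dartOriginMatrix, dartTerminusMatrix, dartReversalMatrix, Matrix.sub_apply,
    mul_apply, of_apply, ite_mul, one_mul, zero_mul, Finset.sum_ite_eq, Finset.mem_univ, if_true]
  by_cases hf : f = e.symm
  · subst hf
    simp only [Dart.symm_toProd, Prod.snd_swap, ne_eq, not_true_eq_false, and_false, ↓reduceIte,
      sub_left_inj]
    rfl
  · by_cases h : f.snd = e.fst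
    · rw [h]; simp [hf, eq_comm]
    · simp [h, hf, eq_comm]

theorem dartTerminusMatrix_mul_dartOriginMatrix :
    G.dartTerminusMatrix * G.dartOriginMatrix = (2 : ℂ) • quantumT G := by
  ext v w
  simp only [dartOriginMatrix, dartTerminusMatrix, quantumT, mul_apply, of_apply, Matrix.smul_apply,
    smul_eq_mul, mul_ite, mul_one, mul_zero, ← ite_and]
  by_cases hvw : G.Adj v w
  · rw [Fintype.sum_eq_single ⟨(w, v), hvw.symm⟩ fun f hf =>
      if_neg fun h => hf (Dart.ext _ _ (Prod.ext h.1 h.2))]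
    simp [hvw, div_eq_mul_inv]
  · refine (Finset.sum_eq_zero fun f _ => if_neg ?_).trans (by simp [hvw])
    rintro ⟨rfl, rfl⟩
    exact hvw f.adj.symm

theorem dartTerminusMatrix_mul_dartReversalMatrix_mul_dartOriginMatrix
    (hdeg : ∀ v, 0 < G.degree v) :
    G.dartTerminusMatrix * G.dartReversalMatrix * G.dartOriginMatrix = (2 : ℂ) • 1 := by
  have hDS : G.dartTerminusMatrix * G.dartReversalMatrix =
      of fun v e => if e.fst = v then 2 / (G.degree v : ℂ) else 0 := by
    ext v e
    simp only [dartReversalMatrix, dartTerminusMatrix, mul_apply, of_apply, mul_ite, mul_one,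
      mul_zero, Dart.symm_involutive.eq_iff, Finset.sum_ite_eq', Finset.mem_univ, if_true]
    rfl
  ext v w
  rw [hDS]
  simp only [dartOriginMatrix, mul_apply, of_apply, Matrix.smul_apply, one_apply, smul_eq_mul,
    mul_ite, mul_one, mul_zero, ← ite_and]
  by_cases hvw : v = w
  · subst hvw
    have hv : (G.degree v : ℂ) ≠ 0 := by exact_mod_cast (hdeg v).ne'
    simp only [and_self, if_true]
    rw [← Finset.sum_filter, Finset.sum_const, dart_fst_fiber_card_eq_degree, nsmul_eq_mul]
    field_simp
  · refine (Finset.sum_eq_zero fun f _ => if_neg ?_).trans (if_neg hvw).symm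
    rintro ⟨rfl, h⟩
    exact hvw h.symm

theorem det_smul_one_sub_dartReversalMatrix (t : ℂ) :
    (t • (1 : Matrix G.Dart G.Dart ℂ) - G.dartReversalMatrix).det =
      (t ^ 2 - 1) ^ G.edgeFinset.card := by
  rw [dartReversalMatrix, det_smul_one_sub_of_pairing G.orientedDartEquiv Dart.symm
    G.orientedDart_symm, edgeFinset_card]

theorem pow_mul_det_smul_one_sub_quantumU_of_sq_ne_one (hdeg : ∀ v, 0 < G.degree v) {lam : ℂ}
    (hlam : lam ^ 2 - 1 ≠ 0) :
    (lam ^ 2 - 1) ^ Fintype.card V * (lam • (1 : Matrix G.Dart G.Dart ℂ) - quantumU G).det =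
      (lam ^ 2 - 1) ^ G.edgeFinset.card *
        ((lam ^ 2 + 1) • (1 : Matrix V V ℂ) - (2 * lam) • quantumT G).det := by
  set C := G.dartOriginMatrix
  set D := G.dartTerminusMatrix
  set S := G.dartReversalMatrix
  set B := lam • D - D * S
  have hdarts : (lam • (1 : Matrix G.Dart G.Dart ℂ) - quantumU G) * (lam • 1 - S) =
      (lam ^ 2 - 1) • 1 - C * B := by
    simp only [quantumU_eq_origin_mul_terminus_sub_reversal, B, Matrix.mul_sub, Matrix.sub_mul,
      Matrix.smul_mul, Matrix.mul_smul, Matrix.mul_one, Matrix.one_mul, Matrix.mul_assoc, S,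
      dartReversalMatrix_mul_self]
    module
  have hvertices : (lam ^ 2 - 1) • (1 : Matrix V V ℂ) - B * C =
      (lam ^ 2 + 1) • 1 - (2 * lam) • quantumT G := by
    rw [Matrix.sub_mul, Matrix.smul_mul, dartTerminusMatrix_mul_dartOriginMatrix,
      dartTerminusMatrix_mul_dartReversalMatrix_mul_dartOriginMatrix G hdeg]
    module
  have hswap := pow_mul_det_smul_one_sub_mul_comm C B (lam ^ 2 - 1)
  rw [← hdarts, det_mul, det_smul_one_sub_dartReversalMatrix, hvertices,
    dart_card_eq_twice_card_edges, two_mul, pow_add] at hswap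
  apply mul_right_cancel₀ (pow_ne_zero G.edgeFinset.card hlam)
  linear_combination hswap

end SimpleGraph

theorem stmt0_general {V : Type*} [Fintype V] [DecidableEq V] (G : SimpleGraph V)
    [DecidableRel G.Adj] (hdeg : ∀ v : V, 1 ≤ G.degree v)
    (lam : ℂ) :
    (lam ^ 2 - 1) ^ (Fintype.card V) *
        (lam • (1 : Matrix G.Dart G.Dart ℂ) - quantumU G).det =
      (lam ^ 2 - 1) ^ G.edgeFinset.card *
        ((lam ^ 2 + 1) • (1 : Matrix V V ℂ) - (2 * lam) • quantumT G).det := by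
  have hdense : Dense {lam : ℂ | lam ^ 2 - 1 ≠ 0} := by
    have hfin : {lam : ℂ | lam ^ 2 - 1 = 0}.Finite :=
      (Set.toFinite {1, -1}).subset fun lam h => by simpa [sub_eq_zero] using h
    exact hfin.countable.dense_compl ℂ
  have hcont := Continuous.ext_on hdense (by fun_prop) (by fun_prop) fun lam hlam =>
    G.pow_mul_det_smul_one_sub_quantumU_of_sq_ne_one hdeg hlam
  exact congrFun hcont lam

theorem stmt0 {V : Type*} [Fintype V] [DecidableEq V] (G : SimpleGraph V)
    [DecidableRel G.Adj] (hconn : G.Connected) (hdeg : ∀ v : V, 1 ≤ G.degree v)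
    (lam : ℂ) :
    (lam ^ 2 - 1) ^ (Fintype.card V) *
        (lam • (1 : Matrix G.Dart G.Dart ℂ) - quantumU G).det =
      (lam ^ 2 - 1) ^ G.edgeFinset.card *
        ((lam ^ 2 + 1) • (1 : Matrix V V ℂ) - (2 * lam) • quantumT G).det :=
  stmt0_general G hdeg lam
end

section
/- Let G be a finite connected simple graph with n vertices v₁,…,vₙ and m edges, all of whose vertices have degree at least 1. Then for every complex number λ, (λ² − 1)^n · (deg v₁ ⋯ deg vₙ) · det(λ·I_{2m} − U) = (λ² − 1)^m · det((λ² + 1)·D − 2λ·A(G)). (This is the second equality of Theorem 4.1, cleared of denominators and negative exponents.) -/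
/-!
Let `L` and `T` be the dart–vertex incidence matrices recording the origin and the terminus of
each dart, and `S` the permutation matrix of dart reversal `e ↦ e⁻¹`. Then
`U = L · diag(2 / deg v) · T - S`, so `λ - U = Q - L · diag(2 / deg v) · T` with `Q = λ + S`.
Since `S² = 1`, `Q⁻¹ = (λ² - 1)⁻¹ (λ - S)` for `λ² ≠ 1`, and `det Q = (λ² - 1)^m` because `S`
splits the `2m` darts into `m` transpositions. The matrix determinant lemma turns `det (λ - U)`
into an `n × n` determinant, where `T L = A` and `T S L = D` give
`T Q⁻¹ L = (λ² - 1)⁻¹ (λ A - D)`. For `λ² = 1` both sides vanish unless the graph is empty.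
-/

open Matrix SimpleGraph Polynomial

open Finset Kronecker

namespace Function.Involutive

variable {α : Type*} {σ : α → α}

def pairEquiv [LinearOrder α] (hσ : Involutive σ) (hfix : ∀ a, σ a ≠ a) :
    {a // a < σ a} × Fin 2 ≃ α where
  toFun p := if p.2 = 0 then p.1 else σ p.1
  invFun a := if h : a < σ a then (⟨a, h⟩, 0) else
    (⟨σ a, by rw [hσ a]; exact (not_lt.mp h).lt_of_ne (hfix a)⟩, 1)
  left_inv := by
    rintro ⟨⟨a, ha⟩, i⟩
    fin_cases i
    · simp [ha]
    · simp [hσ a, ha.not_gt]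
  right_inv a := by
    by_cases h : a < σ a <;> simp [h, hσ a]

theorem apply_pairEquiv [LinearOrder α] (hσ : Involutive σ) (hfix : ∀ a, σ a ≠ a)
    (p : {a // a < σ a}) (i : Fin 2) :
    σ (hσ.pairEquiv hfix (p, i)) = hσ.pairEquiv hfix (p, i + 1) := by
  fin_cases i <;> simp [pairEquiv, hσ _]

theorem submatrix_pairEquiv {R : Type*} [CommRing R] [LinearOrder α] [DecidableEq α]
    (hσ : Involutive σ) (hfix : ∀ a, σ a ≠ a) (x : R) :
    (x • 1 + of fun a b => if b = σ a then (1 : R) else 0).submatrix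
        (hσ.pairEquiv hfix) (hσ.pairEquiv hfix) =
      (1 : Matrix {a // a < σ a} {a // a < σ a} R) ⊗ₖ !![x, 1; 1, x] := by
  ext ⟨p, i⟩ ⟨q, j⟩
  simp only [submatrix_apply, Matrix.add_apply, Matrix.smul_apply, one_apply, of_apply,
    apply_pairEquiv, Equiv.apply_eq_iff_eq, Prod.ext_iff, kroneckerMap_apply]
  by_cases hpq : p = q
  · subst hpq
    fin_cases i <;> fin_cases j <;> simp
  · simp [hpq, Ne.symm hpq]

theorem det_smul_one_add {R : Type*} [CommRing R] [Fintype α] [DecidableEq α]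
    (hσ : Involutive σ) (hfix : ∀ a, σ a ≠ a) (x : R) :
    (x • 1 + of fun a b => if b = σ a then (1 : R) else 0).det =
      (x ^ 2 - 1) ^ (Fintype.card α / 2) := by
  let _ : LinearOrder α := LinearOrder.lift' (Fintype.equivFin α) (Equiv.injective _)
  have hcard : Fintype.card α = 2 * Fintype.card {a // a < σ a} := by
    simp [← Fintype.card_congr (hσ.pairEquiv hfix), mul_comm]
  rw [← det_submatrix_equiv_self (hσ.pairEquiv hfix), submatrix_pairEquiv, det_kronecker,
    det_fin_two_of, det_one, one_pow, one_mul, hcard, Nat.mul_div_cancel_left _ two_pos]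
  ring

end Function.Involutive

theorem Matrix.inv_smul_one_add_of_mul_self_eq_one {n K : Type*} [Fintype n] [DecidableEq n]
    [Field K] {S : Matrix n n K} (hS : S * S = 1) {x : K} (hx : x ^ 2 - 1 ≠ 0) :
    (x • 1 + S)⁻¹ = (x ^ 2 - 1)⁻¹ • (x • 1 - S) := by
  refine inv_eq_right_inv ?_
  have : (x • 1 + S) * (x • 1 - S) = (x ^ 2 - 1) • (1 : Matrix n n K) := by
    simp only [Matrix.add_mul, Matrix.mul_sub, Matrix.smul_mul, Matrix.mul_smul, Matrix.one_mul,
      Matrix.mul_one, hS]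
    module
  rw [Matrix.mul_smul, this, smul_smul, inv_mul_cancel₀ hx, one_smul]

namespace SimpleGraph

variable {V : Type*} [Fintype V] [DecidableEq V] (G : SimpleGraph V) [DecidableRel G.Adj]
  (R : Type*)

def dartSymmMatrix [Zero R] [One R] : Matrix G.Dart G.Dart R :=
  of fun e f => if f = e.symm then 1 else 0

def originMatrix [Zero R] [One R] : Matrix G.Dart V R :=
  of fun e v => if e.fst = v then 1 else 0

def terminusMatrix [Zero R] [One R] : Matrix V G.Dart R :=
  of fun v f => if f.snd = v then 1 else 0

variable {R}

theorem dartSymmMatrix_mul {n : Type*} [NonAssocSemiring R] (M : Matrix G.Dart n R) :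
    G.dartSymmMatrix R * M = M.submatrix Dart.symm id := by
  ext e j
  simp [dartSymmMatrix, mul_apply]

theorem dartSymmMatrix_mul_self [NonAssocSemiring R] :
    G.dartSymmMatrix R * G.dartSymmMatrix R = 1 := by
  rw [dartSymmMatrix_mul]
  ext e f
  simp [dartSymmMatrix, one_apply, eq_comm]

theorem dartSymmMatrix_mul_originMatrix [NonAssocSemiring R] :
    G.dartSymmMatrix R * G.originMatrix R = (G.terminusMatrix R)ᵀ := by
  ext e v
  simp [dartSymmMatrix_mul, originMatrix, terminusMatrix]

theorem terminusMatrix_mul_originMatrix [NonAssocSemiring R] :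
    G.terminusMatrix R * G.originMatrix R = G.adjMatrix R := by
  ext u v
  simp only [terminusMatrix, originMatrix, mul_apply, of_apply, mul_boole, ← ite_and,
    adjMatrix_apply]
  by_cases h : G.Adj u v
  · rw [Fintype.sum_eq_single ⟨(v, u), h.symm⟩, if_pos ⟨rfl, rfl⟩, if_pos h]
    rintro f hf
    exact if_neg fun ⟨hv, hu⟩ => hf (Dart.ext _ _ (Prod.ext hv hu))
  · rw [if_neg h]
    exact Finset.sum_eq_zero fun f _ => if_neg fun ⟨hu, hv⟩ => h (hv ▸ hu ▸ f.adj.symm)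

theorem dart_snd_fiber_card_eq_degree (v : V) :
    #{d : G.Dart | d.snd = v} = G.degree v := by
  rw [← dart_fst_fiber_card_eq_degree]
  exact Finset.card_equiv (Dart.symm_involutive.toPerm _) (by simp)

theorem terminusMatrix_mul_transpose [NonAssocSemiring R] :
    G.terminusMatrix R * (G.terminusMatrix R)ᵀ = diagonal fun v => (G.degree v : R) := by
  ext u v
  simp only [terminusMatrix, mul_apply, transpose_apply, of_apply, mul_boole, ← ite_and,
    diagonal_apply]
  by_cases huv : u = v
  · subst huv
    simp only [and_self, Finset.sum_boole, dart_snd_fiber_card_eq_degree, if_true]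
  · rw [if_neg huv]
    exact Finset.sum_eq_zero fun f _ => if_neg fun ⟨hu, hv⟩ => huv (hv.symm.trans hu)

omit [DecidableRel G.Adj] in
theorem originMatrix_mul_diagonal_mul_terminusMatrix [NonAssocSemiring R] (d : V → R) :
    G.originMatrix R * diagonal d * G.terminusMatrix R =
      of fun e f => if f.snd = e.fst then d f.snd else 0 := by
  ext e f
  by_cases h : f.snd = e.fst
  · simp [originMatrix, terminusMatrix, mul_apply, diagonal_apply, h]
  · simp [originMatrix, terminusMatrix, mul_apply, diagonal_apply, h, Ne.symm h]

theorem quantumU_eq :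
    quantumU G = G.originMatrix ℂ * diagonal (fun v => 2 / (G.degree v : ℂ)) *
      G.terminusMatrix ℂ - G.dartSymmMatrix ℂ := by
  rw [originMatrix_mul_diagonal_mul_terminusMatrix]
  ext e f
  by_cases hf : f = e.symm
  · subst hf
    simp [quantumU, dartSymmMatrix]
  · simp [quantumU, dartSymmMatrix, hf]

theorem det_smul_one_add_dartSymmMatrix [CommRing R] (x : R) :
    (x • 1 + G.dartSymmMatrix R).det = (x ^ 2 - 1) ^ #G.edgeFinset := by
  rw [dartSymmMatrix, Dart.symm_involutive.det_smul_one_add (fun d => d.symm_ne) x,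
    dart_card_eq_twice_card_edges, Nat.mul_div_cancel_left _ two_pos]

theorem terminusMatrix_mul_inv_mul_originMatrix {K : Type*} [Field K] {x : K}
    (hx : x ^ 2 - 1 ≠ 0) :
    G.terminusMatrix K * (x • 1 + G.dartSymmMatrix K)⁻¹ * G.originMatrix K =
      (x ^ 2 - 1)⁻¹ • (x • G.adjMatrix K - diagonal fun v => (G.degree v : K)) := by
  rw [inv_smul_one_add_of_mul_self_eq_one (G.dartSymmMatrix_mul_self) hx, Matrix.mul_smul,
    Matrix.smul_mul, Matrix.mul_sub, Matrix.sub_mul, Matrix.mul_smul, Matrix.smul_mul,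
    Matrix.mul_one, terminusMatrix_mul_originMatrix, Matrix.mul_assoc,
    dartSymmMatrix_mul_originMatrix, terminusMatrix_mul_transpose]

theorem det_smul_one_sub_quantumU (hdeg : ∀ v : V, 1 ≤ G.degree v) {x : ℂ}
    (hx : x ^ 2 - 1 ≠ 0) :
    (x ^ 2 - 1) ^ Fintype.card V * (∏ v : V, (G.degree v : ℂ)) *
        (x • (1 : Matrix G.Dart G.Dart ℂ) - quantumU G).det =
      (x ^ 2 - 1) ^ #G.edgeFinset *
        ((x ^ 2 + 1) • (diagonal fun v => (G.degree v : ℂ)) - (2 * x) • G.adjMatrix ℂ).det := by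
  set D : Matrix V V ℂ := diagonal fun v => (G.degree v : ℂ)
  set Δ : Matrix V V ℂ := diagonal fun v => 2 / (G.degree v : ℂ)
  set Q := x • 1 + G.dartSymmMatrix ℂ with hQdef
  have hQ : IsUnit Q.det := by
    rw [det_smul_one_add_dartSymmMatrix]
    exact hx.isUnit.pow _
  have hDΔ : D * Δ = (2 : ℂ) • 1 := by
    rw [diagonal_mul_diagonal, ← diagonal_one, ← diagonal_smul]
    congr 1 with v
    have : (G.degree v : ℂ) ≠ 0 := Nat.cast_ne_zero.mpr (by have := hdeg v; omega)
    simp [mul_div_cancel₀ _ this]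
  have hsplit : x • 1 - quantumU G = Q + -G.originMatrix ℂ * (Δ * G.terminusMatrix ℂ) := by
    rw [quantumU_eq, Matrix.neg_mul, ← Matrix.mul_assoc, hQdef]
    abel
  have hfactor : D * (1 + Δ * G.terminusMatrix ℂ * Q⁻¹ * -G.originMatrix ℂ) =
      D - (D * Δ) * (G.terminusMatrix ℂ * Q⁻¹ * G.originMatrix ℂ) := by
    simp only [Matrix.mul_add, Matrix.mul_neg, Matrix.mul_assoc, Matrix.mul_one, sub_eq_add_neg]
  have hschur : (x ^ 2 - 1) • (D * (1 + Δ * G.terminusMatrix ℂ * Q⁻¹ * -G.originMatrix ℂ)) =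
      (x ^ 2 + 1) • D - (2 * x) • G.adjMatrix ℂ := by
    rw [hfactor, hDΔ, terminusMatrix_mul_inv_mul_originMatrix G hx, Matrix.smul_mul,
      Matrix.one_mul, smul_sub, smul_comm _ (2 : ℂ), smul_smul _ (x ^ 2 - 1)⁻¹,
      mul_inv_cancel₀ hx, one_smul]
    module
  calc (x ^ 2 - 1) ^ Fintype.card V * (∏ v : V, (G.degree v : ℂ)) * (x • 1 - quantumU G).det
      = Q.det * ((x ^ 2 - 1) •
          (D * (1 + Δ * G.terminusMatrix ℂ * Q⁻¹ * -G.originMatrix ℂ))).det := by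
        rw [hsplit, det_add_mul _ _ hQ, det_smul, det_mul, det_diagonal]
        ring
    _ = _ := by rw [hschur, det_smul_one_add_dartSymmMatrix]

theorem det_smul_one_sub_quantumU_of_sq_eq_one (hdeg : ∀ v : V, 1 ≤ G.degree v) {x : ℂ}
    (hx : x ^ 2 - 1 = 0) :
    (x ^ 2 - 1) ^ Fintype.card V * (∏ v : V, (G.degree v : ℂ)) *
        (x • (1 : Matrix G.Dart G.Dart ℂ) - quantumU G).det =
      (x ^ 2 - 1) ^ #G.edgeFinset *
        ((x ^ 2 + 1) • (diagonal fun v => (G.degree v : ℂ)) - (2 * x) • G.adjMatrix ℂ).det := by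
  rcases isEmpty_or_nonempty V with hV | ⟨⟨v⟩⟩
  · have : IsEmpty G.Dart := ⟨fun d => hV.elim d.fst⟩
    have hm : #G.edgeFinset = 0 := by simpa using G.dart_card_eq_twice_card_edges.symm
    simp [hm]
  · obtain ⟨w, hvw⟩ := G.degree_pos_iff_exists_adj v |>.mp (hdeg v)
    have hm : #G.edgeFinset ≠ 0 := (card_pos.mpr ⟨s(v, w), G.mem_edgeFinset.mpr hvw⟩).ne'
    simp [hx, hm, (Fintype.card_pos_iff.mpr ⟨v⟩).ne']

end SimpleGraph

theorem stmt1_general {V : Type*} [Fintype V] [DecidableEq V] (G : SimpleGraph V)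
    [DecidableRel G.Adj] (hdeg : ∀ v : V, 1 ≤ G.degree v)
    (lam : ℂ) :
    (lam ^ 2 - 1) ^ (Fintype.card V) * (∏ v : V, (G.degree v : ℂ)) *
        (lam • (1 : Matrix G.Dart G.Dart ℂ) - quantumU G).det =
      (lam ^ 2 - 1) ^ G.edgeFinset.card *
        ((lam ^ 2 + 1) • (Matrix.diagonal fun v => (G.degree v : ℂ)) -
          (2 * lam) • G.adjMatrix ℂ).det := by
  by_cases hlam : lam ^ 2 - 1 = 0
  · exact G.det_smul_one_sub_quantumU_of_sq_eq_one hdeg hlam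
  · exact G.det_smul_one_sub_quantumU hdeg hlam

theorem stmt1 {V : Type*} [Fintype V] [DecidableEq V] (G : SimpleGraph V)
    [DecidableRel G.Adj] (hconn : G.Connected) (hdeg : ∀ v : V, 1 ≤ G.degree v)
    (lam : ℂ) :
    (lam ^ 2 - 1) ^ (Fintype.card V) * (∏ v : V, (G.degree v : ℂ)) *
        (lam • (1 : Matrix G.Dart G.Dart ℂ) - quantumU G).det =
      (lam ^ 2 - 1) ^ G.edgeFinset.card *
        ((lam ^ 2 + 1) • (Matrix.diagonal fun v => (G.degree v : ℂ)) -
          (2 * lam) • G.adjMatrix ℂ).det :=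
  stmt1_general G hdeg lam
end

section
/- Let G be a finite connected simple graph with n vertices and m edges, all of whose vertices have degree at least 1. Then for every complex number t, (1 − t²)^n · det(I_{2m} − t·U) = (1 − t²)^m · det((1 + t²)·I_n − 2t·T(G)). (This is the intermediate identity established in the proof of Theorem 4.1, with the factor (1−t²)^{m−n} cleared of negative exponents.) -/
open Matrix SimpleGraph Polynomial

/-!
Let `J` be the dart-reversal permutation matrix, `P d v = [o d = v]` and
`Q v d = [t d = v] / deg v`. Then `U = 2 P Q - J`, `Q P = T` and `Q J P = 1`. As `J² = 1`,
`(1 - tJ)(1 - tU) = (1 - t²) I - 2t (1 - tJ) P Q`, and the Weinstein–Aronszajn identity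
`cⁿ det (c I - A B) = c^(2m) det (c I - B A)` moves this to the vertices, where it becomes
`(1 - t²) I - 2t (T - t I) = (1 + t²) I - 2t T`. Finally `det (1 - tJ) = (1 - t²)^m`, since `J`
is a product of `m` disjoint transpositions, and the common factor `(1 - t²)^m` cancels
(when it vanishes, both sides of the claim vanish).
-/

theorem Matrix.det_one_add_smul_permMatrix_of_involutive {ι R : Type*} [Fintype ι]
    [DecidableEq ι] [CommRing R] (σ : Equiv.Perm ι) (hσ : Function.Involutive σ)
    (hfix : ∀ i, σ i ≠ i) {k : ℕ} (hk : Fintype.card ι = 2 * k) (t : R) :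
    (1 + t • σ.permMatrix R).det = (1 - t ^ 2) ^ k := by
  let _ : LinearOrder ι := LinearOrder.lift' _ (Fintype.equivFin ι).injective
  have hswap : ∀ i, i < σ i ↔ ¬σ i < σ (σ i) := fun i => by
    rw [hσ i]
    exact ⟨fun h => h.not_gt, fun h => (lt_or_gt_of_ne (hfix i).symm).resolve_right h⟩
  have hne : ∀ a b, a < σ a → b < σ b → σ a ≠ b := fun a b ha hb hab => by
    subst hab
    rw [hσ] at hb
    exact hb.not_gt ha
  let e : {i // i < σ i} ⊕ {i // i < σ i} ≃ ι :=
    (Equiv.sumCongr (Equiv.refl _) (Equiv.subtypeEquiv σ hswap)).trans (Equiv.sumCompl _)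
  have hcard : Fintype.card {i // i < σ i} = k := by
    have hsum := Fintype.card_congr e
    rw [Fintype.card_sum] at hsum
    omega
  have hblocks :
      (1 + t • σ.permMatrix R).submatrix e e = fromBlocks 1 (t • 1) (t • 1) 1 := by
    ext (⟨a, ha⟩ | ⟨a, ha⟩) (⟨b, hb⟩ | ⟨b, hb⟩) <;>
      simp [e, one_apply, hσ a, hne a b ha hb, (hne b a hb ha).symm]
  have hdiag : (1 : Matrix {i // i < σ i} {i // i < σ i} R) - (t • 1) * (t • 1) =
      (1 - t ^ 2) • 1 := by
    rw [smul_mul_smul_comm, one_mul, sub_smul, one_smul, sq]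
  rw [← det_submatrix_equiv_self e, hblocks, det_fromBlocks_one₁₁, hdiag, det_smul, det_one,
    mul_one, hcard]

theorem Matrix.det_smul_one_sub_mul_comm {m n R : Type*} [Fintype m] [Fintype n]
    [DecidableEq m] [DecidableEq n] [CommRing R] (A : Matrix m n R) (B : Matrix n m R) (c : R) :
    c ^ Fintype.card n * (c • 1 - A * B).det = c ^ Fintype.card m * (c • 1 - B * A).det := by
  simpa [eval_charpoly, smul_one_eq_diagonal] using congrArg (eval c) (charpoly_mul_comm' A B)

namespace SimpleGraph

variable {V : Type*} [DecidableEq V] (G : SimpleGraph V)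

def dartReverseMatrix (R : Type*) [Zero R] [One R] : Matrix G.Dart G.Dart R :=
  (Function.Involutive.toPerm _ Dart.symm_involutive).permMatrix R

def dartFstMatrix : Matrix G.Dart V ℂ :=
  of fun d v => if d.fst = v then 1 else 0

theorem dartReverseMatrix_apply {R : Type*} [Zero R] [One R] (e f : G.Dart) :
    G.dartReverseMatrix R e f = if e.symm = f then 1 else 0 := by
  simp [dartReverseMatrix]

variable [Fintype V] [DecidableRel G.Adj]

noncomputable def dartSndAvgMatrix : Matrix V G.Dart ℂ :=
  of fun v d => if d.snd = v then (G.degree v : ℂ)⁻¹ else 0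

theorem dartReverseMatrix_mul_self (R : Type*) [NonAssocSemiring R] :
    G.dartReverseMatrix R * G.dartReverseMatrix R = 1 := by
  rw [dartReverseMatrix, ← permMatrix_mul, ← permMatrix_one]
  congr

theorem sum_dart_ite_toProd_eq {M : Type*} [AddCommMonoid M] (p : V × V) (c : M) :
    ∑ d : G.Dart, (if d.toProd = p then c else 0) = if G.Adj p.1 p.2 then c else 0 := by
  split_ifs with hp
  · simp_rw [← Dart.ext_iff (d₂ := ⟨p, hp⟩)]
    simp
  · exact Finset.sum_eq_zero fun d _ => if_neg fun hd : d.toProd = p => hp (hd ▸ d.adj)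

theorem quantumU_eq_s2 :
    quantumU G =
      (2 : ℂ) • (G.dartFstMatrix * G.dartSndAvgMatrix) - G.dartReverseMatrix ℂ := by
  ext e f
  simp only [quantumU, Matrix.sub_apply, Matrix.smul_apply, mul_apply, dartFstMatrix,
    dartSndAvgMatrix, dartReverseMatrix_apply, of_apply, ite_mul, one_mul, zero_mul,
    Finset.sum_ite_eq, Finset.mem_univ, if_true]
  by_cases hs : f.snd = e.fst
  · have hdeg : (G.degree f.snd : ℂ) = G.degree e.fst :=
      congrArg (fun v => (G.degree v : ℂ)) hs
    rw [hdeg]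
    by_cases hfe : f = e.symm
    · simp [hfe, div_eq_mul_inv]
    · simp [hs, hfe, Ne.symm hfe, div_eq_mul_inv]
  · have hfe : f ≠ e.symm := by
      rintro rfl
      exact hs rfl
    simp [hs, hfe, Ne.symm hfe]

theorem dartSndAvgMatrix_mul_dartFstMatrix :
    G.dartSndAvgMatrix * G.dartFstMatrix = quantumT G := by
  ext u v
  have hterm : ∀ d : G.Dart, (if d.snd = u then (G.degree u : ℂ)⁻¹ else 0) *
      (if d.fst = v then 1 else 0) = if d.toProd = (v, u) then (G.degree u : ℂ)⁻¹ else 0 := by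
    intro d
    simp only [ite_zero_mul_ite_zero, mul_one, Prod.ext_iff, and_comm]
  simp only [mul_apply, dartFstMatrix, dartSndAvgMatrix, of_apply, hterm, sum_dart_ite_toProd_eq,
    quantumT, G.adj_comm v u, one_div]

theorem dartSndAvgMatrix_mul_dartReverseMatrix_mul_dartFstMatrix (hdeg : ∀ v, 0 < G.degree v) :
    G.dartSndAvgMatrix * G.dartReverseMatrix ℂ * G.dartFstMatrix = 1 := by
  ext u v
  have hQJ : ∀ d : G.Dart, (G.dartSndAvgMatrix * G.dartReverseMatrix ℂ) u d =
      if d.fst = u then (G.degree u : ℂ)⁻¹ else 0 := by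
    intro d
    simp [mul_apply, dartSndAvgMatrix, dartReverseMatrix_apply, Dart.symm_involutive.eq_iff]
  rw [mul_apply]
  simp only [hQJ, dartFstMatrix, of_apply, ite_zero_mul_ite_zero, mul_one]
  rcases eq_or_ne u v with rfl | huv
  · simp only [and_self, one_apply_eq]
    rw [← Finset.sum_filter, Finset.sum_const, G.dart_fst_fiber_card_eq_degree, nsmul_eq_mul]
    exact mul_inv_cancel₀ (Nat.cast_ne_zero.mpr (hdeg u).ne')
  · rw [one_apply_ne huv]
    exact Finset.sum_eq_zero fun d _ => if_neg fun h => huv (h.1.symm.trans h.2)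

theorem pow_mul_det_one_sub_smul_quantumU (hdeg : ∀ v, 0 < G.degree v) (t : ℂ) :
    (1 - t ^ 2) ^ G.edgeFinset.card *
        ((1 - t ^ 2) ^ Fintype.card V * (1 - t • quantumU G).det) =
      (1 - t ^ 2) ^ G.edgeFinset.card * ((1 - t ^ 2) ^ G.edgeFinset.card *
        ((1 + t ^ 2) • (1 : Matrix V V ℂ) - (2 * t) • quantumT G).det) := by
  set J := G.dartReverseMatrix ℂ
  set P := G.dartFstMatrix
  set Q := G.dartSndAvgMatrix
  have hJJ : J * J = 1 := G.dartReverseMatrix_mul_self ℂ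
  have hfactor : (1 - t • J) * (1 - t • quantumU G) =
      (1 - t ^ 2) • 1 - ((2 * t) • ((1 - t • J) * P)) * Q := by
    rw [show quantumU G = (2 : ℂ) • (P * Q) - J from quantumU_eq_s2 G]
    simp only [Matrix.mul_sub, Matrix.sub_mul, Matrix.mul_one, Matrix.one_mul, Matrix.mul_smul,
      Matrix.smul_mul, smul_sub, Matrix.mul_assoc, hJJ]
    module
  have hcomm : Q * ((2 * t) • ((1 - t • J) * P)) = (2 * t) • (quantumT G - t • 1) := by
    rw [Matrix.mul_smul, Matrix.sub_mul, Matrix.one_mul, Matrix.mul_sub, Matrix.smul_mul,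
      Matrix.mul_smul, ← Matrix.mul_assoc, dartSndAvgMatrix_mul_dartFstMatrix,
      dartSndAvgMatrix_mul_dartReverseMatrix_mul_dartFstMatrix G hdeg]
  have hJdet : (1 - t • J).det = (1 - t ^ 2) ^ G.edgeFinset.card := by
    simpa [J, dartReverseMatrix, sub_eq_add_neg, neg_smul] using
      det_one_add_smul_permMatrix_of_involutive _ Dart.symm_involutive Dart.symm_ne
        G.dart_card_eq_twice_card_edges (-t)
  have hdiag : (1 - t ^ 2) • 1 - (2 * t) • (quantumT G - t • 1) =
      (1 + t ^ 2) • (1 : Matrix V V ℂ) - (2 * t) • quantumT G := by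
    module
  have hWA := det_smul_one_sub_mul_comm ((2 * t) • ((1 - t • J) * P)) Q (1 - t ^ 2)
  rw [← hfactor, hcomm, hdiag, det_mul, hJdet, G.dart_card_eq_twice_card_edges] at hWA
  rw [two_mul, pow_add] at hWA
  linear_combination hWA

end SimpleGraph

theorem stmt2_general {V : Type*} [Fintype V] [DecidableEq V] (G : SimpleGraph V)
    [DecidableRel G.Adj] (hdeg : ∀ v : V, 1 ≤ G.degree v)
    (t : ℂ) :
    (1 - t ^ 2) ^ (Fintype.card V) *
        ((1 : Matrix G.Dart G.Dart ℂ) - t • quantumU G).det =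
      (1 - t ^ 2) ^ G.edgeFinset.card *
        ((1 + t ^ 2) • (1 : Matrix V V ℂ) - (2 * t) • quantumT G).det := by
  have key := G.pow_mul_det_one_sub_smul_quantumU hdeg t
  rcases eq_or_ne ((1 - t ^ 2) ^ G.edgeFinset.card) 0 with hc | hc
  · obtain ⟨hc, hm⟩ := pow_eq_zero_iff'.mp hc
    have hn : Fintype.card V ≠ 0 := by
      have hchoose := G.card_edgeFinset_le_card_choose_two
      contrapose! hm
      simpa [hm] using hchoose
    simp [hc, hm, hn]
  · exact mul_left_cancel₀ hc key

theorem stmt2 {V : Type*} [Fintype V] [DecidableEq V] (G : SimpleGraph V)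
    [DecidableRel G.Adj] (hconn : G.Connected) (hdeg : ∀ v : V, 1 ≤ G.degree v)
    (t : ℂ) :
    (1 - t ^ 2) ^ (Fintype.card V) *
        ((1 : Matrix G.Dart G.Dart ℂ) - t • quantumU G).det =
      (1 - t ^ 2) ^ G.edgeFinset.card *
        ((1 + t ^ 2) • (1 : Matrix V V ℂ) - (2 * t) • quantumT G).det :=
  stmt2_general G hdeg t
end

section
/- Let G be a finite connected simple graph with n vertices and m edges such that m ≥ n, all of whose vertices have degree at least 1. Then the characteristic polynomial of U over ℂ factors as char(U)(X) = (X² − 1)^{m−n} · ∏_{μ} (X² − 2μX + 1), where the product runs over the multiset of roots μ (with multiplicity) of the characteristic polynomial of T(G) over ℂ. (Corollary 4.2, stated as a polynomial factorization.) -/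
open Matrix SimpleGraph Polynomial

/-!
Write `U = B * C - S`, where `S` is the permutation matrix of dart reversal, `B e v = [o(e) = v]`
and `C v f = [t(f) = v] * 2 / deg v`. Then `C * B = 2 T` and `C * S * B = 2`. Since `S² = 1`,
`(z + S - B C) (z - S) = (z² - 1) - B (C (z - S))`, and Sylvester's determinant identity
trades this `2m × 2m` determinant for the `n × n` determinant of
`(z² - 1) - C (z - S) B = (z² + 1) - 2 z T`, which factors over the eigenvalues of `T`.
The remaining factor is `det (z - S) = (z² - 1)^m`: conjugating `S` by the diagonal of signs
of a fixed orientation of the edges gives `-S`, so `char(S)² = char(-S) char(S) = (X² - 1)^(2m)`.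
-/

theorem Polynomial.Monic.eq_of_mul_self_eq_mul_self {R : Type*} [CommRing R] [IsDomain R]
    [NeZero (2 : R)] {p q : R[X]} (hp : p.Monic) (hq : q.Monic) (h : p * p = q * q) : p = q := by
  refine (mul_self_eq_mul_self_iff.mp h).resolve_right fun hpq => ?_
  have := hp.leadingCoeff
  rw [hpq, leadingCoeff_neg, hq.leadingCoeff, neg_eq_iff_add_eq_zero, one_add_one_eq_two] at this
  exact two_ne_zero this

namespace Matrix

variable {R : Type*} [CommRing R] {m n : Type*} [Fintype m] [Fintype n] [DecidableEq m]
  [DecidableEq n]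

theorem eval_charpoly_eq_det (M : Matrix n n R) (t : R) :
    M.charpoly.eval t = (t • 1 - M).det := by
  rw [eval_charpoly, scalar_apply, smul_one_eq_diagonal]

theorem det_smul_one_sub_mul_comm_s3 (A : Matrix m n R) (B : Matrix n m R) (t : R) :
    t ^ Fintype.card n * (t • 1 - A * B).det = t ^ Fintype.card m * (t • 1 - B * A).det := by
  simpa [eval_charpoly, smul_one_eq_diagonal] using congrArg (eval t) (charpoly_mul_comm' A B)

theorem smul_one_add_mul_smul_one_sub_of_mul_self {S : Matrix n n R} (hS : S * S = 1) (z : R) :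
    (z • 1 + S) * (z • 1 - S) = (z ^ 2 - 1) • 1 := by
  rw [add_mul, mul_sub, mul_sub, smul_mul_smul, smul_one_mul, mul_smul_one, hS, sub_smul,
    one_smul, sq, mul_one]
  abel

theorem charpoly_neg_mul_charpoly_of_mul_self {S : Matrix n n R} (hS : S * S = 1) :
    (-S).charpoly * S.charpoly = (X ^ 2 - 1) ^ Fintype.card n := by
  have hS' : S.map C * S.map C = 1 := by
    rw [← Matrix.map_mul, hS, Matrix.map_one C C.map_zero C.map_one]
  have hchar (M : Matrix n n R) : charmatrix M = (X : R[X]) • 1 - M.map C := by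
    rw [charmatrix, scalar_apply, smul_one_eq_diagonal]; rfl
  rw [charpoly, charpoly, ← det_mul, hchar, hchar, Matrix.map_neg _ (map_neg C), sub_neg_eq_add,
    smul_one_add_mul_smul_one_sub_of_mul_self hS', det_smul, det_one, mul_one]

theorem charpoly_neg_eq_of_conj {S D : Matrix n n R} (hD : D * D = 1) (hDS : D * S * D = -S) :
    (-S).charpoly = S.charpoly := by
  rw [← hDS, mul_assoc, charpoly_mul_comm, mul_assoc, hD, mul_one]

theorem det_smul_one_add_sub_mul_of_mul_self {S : Matrix m m R}
    (hS : S * S = 1) (B : Matrix m n R) (C : Matrix n m R) (z : R) :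
    (z ^ 2 - 1) ^ Fintype.card n * ((z • 1 + S - B * C).det * (z • 1 - S).det) =
      (z ^ 2 - 1) ^ Fintype.card m * ((z ^ 2 - 1) • 1 - C * (z • 1 - S) * B).det := by
  rw [← det_mul, sub_mul, smul_one_add_mul_smul_one_sub_of_mul_self hS, Matrix.mul_assoc B,
    det_smul_one_sub_mul_comm_s3, Matrix.mul_assoc]

theorem det_smul_one_sub_smul_eq_prod_roots {K : Type*} [Field K] {T : Matrix n n K}
    (hT : T.charpoly.Splits) (a b : K) :
    (a • 1 - b • T).det = (T.charpoly.roots.map fun μ => a - b * μ).prod := by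
  have hcard : T.charpoly.roots.card = Fintype.card n := by
    rw [← hT.natDegree_eq_card_roots, charpoly_natDegree_eq_dim]
  rcases eq_or_ne b 0 with rfl | hb
  · simp [hcard]
  · have : a • (1 : Matrix n n K) - b • T = b • ((a / b) • 1 - T) := by
      rw [smul_sub, smul_smul, mul_div_cancel₀ a hb]
    rw [this, det_smul, ← eval_charpoly_eq_det, hT.eval_eq_prod_roots_of_monic T.charpoly_monic]
    calc b ^ Fintype.card n * (T.charpoly.roots.map fun μ => a / b - μ).prod
        = (T.charpoly.roots.map fun μ => b * (a / b - μ)).prod := by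
          rw [Multiset.prod_map_mul, Multiset.map_const', Multiset.prod_replicate, hcard]
      _ = _ := by congr; funext μ; field_simp

end Matrix

namespace QuantumWalk

section

variable {V : Type*} [DecidableEq V] (G : SimpleGraph V)

noncomputable def reversalMatrix : Matrix G.Dart G.Dart ℂ :=
  (Dart.symm_involutive.toPerm _).permMatrix ℂ

theorem reversalMatrix_apply (e f : G.Dart) :
    reversalMatrix G e f = if f = e.symm then 1 else 0 := by
  simp [reversalMatrix, eq_comm]

end

section

variable {V : Type*} [Fintype V] (G : SimpleGraph V)

noncomputable def orientationSign (e : G.Dart) : ℂ :=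
  if Fintype.equivFin V e.fst < Fintype.equivFin V e.snd then 1 else -1

theorem orientationSign_mul_self (e : G.Dart) :
    orientationSign G e * orientationSign G e = 1 := by
  unfold orientationSign; split_ifs <;> norm_num

theorem orientationSign_symm (e : G.Dart) : orientationSign G e.symm = -orientationSign G e := by
  have hne : Fintype.equivFin V e.fst ≠ Fintype.equivFin V e.snd :=
    (Fintype.equivFin V).injective.ne e.fst_ne_snd
  rcases hne.lt_or_gt with h | h <;> simp [orientationSign, h, h.not_gt]

end

variable {V : Type*} [Fintype V] [DecidableEq V] (G : SimpleGraph V) [DecidableRel G.Adj]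

noncomputable def originMatrix : Matrix G.Dart V ℂ :=
  of fun e v => if v = e.fst then 1 else 0

noncomputable def terminusMatrix : Matrix V G.Dart ℂ :=
  of fun v f => if f.snd = v then 2 / G.degree v else 0

theorem reversalMatrix_mul_self : reversalMatrix G * reversalMatrix G = 1 := by
  have h : Dart.symm_involutive.toPerm _ * Dart.symm_involutive.toPerm _ =
      (1 : Equiv.Perm G.Dart) :=
    Equiv.ext Dart.symm_symm
  rw [reversalMatrix, ← permMatrix_mul, h, permMatrix_one]

theorem mul_reversalMatrix {α : Type*} (M : Matrix α G.Dart ℂ) :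
    M * reversalMatrix G = M.submatrix id Dart.symm :=
  PEquiv.mul_toMatrix_toPEquiv M _

theorem quantumU_eq : quantumU G = originMatrix G * terminusMatrix G - reversalMatrix G := by
  ext e f
  rw [Matrix.sub_apply, Matrix.mul_apply, Fintype.sum_eq_single e.fst fun v hv => by
    simp [originMatrix, hv]]
  simp only [quantumU, originMatrix, terminusMatrix, reversalMatrix_apply, of_apply, if_true,
    one_mul]
  by_cases hfe : f.snd = e.fst
  · rw [hfe]
    by_cases h : f = e.symm <;> simp [h]
  · have h : f ≠ e.symm := fun h => hfe (h ▸ rfl)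
    simp [hfe, h]

theorem terminusMatrix_mul_originMatrix :
    terminusMatrix G * originMatrix G = (2 : ℂ) • quantumT G := by
  ext u v
  have hsummand (d : G.Dart) : terminusMatrix G u d * originMatrix G d v =
      if d.toProd = (v, u) then (2 : ℂ) / G.degree u else 0 := by
    simp only [terminusMatrix, originMatrix, of_apply, Prod.ext_iff]
    split_ifs <;> simp_all
  rw [Matrix.mul_apply, Finset.sum_congr rfl fun d _ => hsummand d, Matrix.smul_apply, quantumT]
  by_cases hadj : G.Adj u v
  · rw [Fintype.sum_eq_single ⟨(v, u), hadj.symm⟩ fun d hd =>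
      if_neg fun h => hd (Dart.ext _ _ h)]
    simp [hadj, div_eq_mul_inv]
  · rw [Finset.sum_eq_zero fun d _ => if_neg fun h => hadj (by simpa [h] using d.adj.symm)]
    simp [hadj]

theorem terminusMatrix_mul_reversalMatrix :
    terminusMatrix G * reversalMatrix G =
      of fun (v : V) (e : G.Dart) => if e.fst = v then (2 : ℂ) / G.degree v else 0 := by
  ext v e
  simp [mul_reversalMatrix, terminusMatrix]

theorem terminusMatrix_mul_reversalMatrix_mul_originMatrix (hdeg : ∀ v, 0 < G.degree v) :
    terminusMatrix G * reversalMatrix G * originMatrix G = (2 : ℂ) • 1 := by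
  ext u v
  rw [terminusMatrix_mul_reversalMatrix, Matrix.mul_apply]
  simp only [originMatrix, of_apply, mul_ite, mul_one, mul_zero, Matrix.smul_apply,
    Matrix.one_apply]
  by_cases huv : u = v
  · subst huv
    have hd : (G.degree u : ℂ) ≠ 0 := Nat.cast_ne_zero.mpr (hdeg u).ne'
    have hsummand (d : G.Dart) : (if u = d.fst then if d.fst = u then (2 : ℂ) / G.degree u else 0
        else 0) = if d.fst = u then (2 : ℂ) / G.degree u else 0 := by
      by_cases h : d.fst = u <;> simp [h, Ne.symm]
    rw [Finset.sum_congr rfl fun d _ => hsummand d, ← Finset.sum_filter, Finset.sum_const,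
      dart_fst_fiber_card_eq_degree, nsmul_eq_mul, if_pos rfl, smul_eq_mul, mul_one]
    field_simp
  · rw [if_neg huv, smul_zero]
    exact Finset.sum_eq_zero fun d _ => by split_ifs <;> simp_all

theorem charpoly_neg_reversalMatrix :
    (-reversalMatrix G).charpoly = (reversalMatrix G).charpoly := by
  refine charpoly_neg_eq_of_conj (D := diagonal (orientationSign G)) ?_ ?_
  · rw [diagonal_mul_diagonal, funext (orientationSign_mul_self G), diagonal_one]
  · ext e f
    rw [mul_diagonal, diagonal_mul, neg_apply, reversalMatrix_apply]
    split_ifs with h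
    · rw [h, mul_one, mul_comm, orientationSign_symm, neg_mul, orientationSign_mul_self]
    · simp

theorem charpoly_reversalMatrix :
    (reversalMatrix G).charpoly = (X ^ 2 - 1) ^ G.edgeFinset.card := by
  have hmonic : ((X : ℂ[X]) ^ 2 - 1).Monic := monic_X_pow_sub (by simp)
  refine (charpoly_monic _).eq_of_mul_self_eq_mul_self (hmonic.pow _) ?_
  rw [← pow_add, ← two_mul, ← dart_card_eq_twice_card_edges]
  nth_rewrite 1 [← charpoly_neg_reversalMatrix]
  exact charpoly_neg_mul_charpoly_of_mul_self (reversalMatrix_mul_self G)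

theorem eval_charpoly_quantumU_mul (hdeg : ∀ v, 0 < G.degree v) (z : ℂ) :
    (quantumU G).charpoly.eval z * (z ^ 2 - 1) ^ (G.edgeFinset.card + Fintype.card V) =
      (z ^ 2 - 1) ^ (G.edgeFinset.card + G.edgeFinset.card) *
        ((quantumT G).charpoly.roots.map fun μ => z ^ 2 - 2 * μ * z + 1).prod := by
  have key := det_smul_one_add_sub_mul_of_mul_self (reversalMatrix_mul_self G)
    (originMatrix G) (terminusMatrix G) z
  have hCB : terminusMatrix G * (z • 1 - reversalMatrix G) * originMatrix G =
      (2 * z) • quantumT G - (2 : ℂ) • 1 := by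
    rw [Matrix.mul_sub, Matrix.sub_mul, Matrix.mul_smul, Matrix.mul_one, Matrix.smul_mul,
      terminusMatrix_mul_originMatrix, terminusMatrix_mul_reversalMatrix_mul_originMatrix G hdeg,
      smul_smul, mul_comm]
  have hM : (z ^ 2 - 1) • (1 : Matrix V V ℂ) - ((2 * z) • quantumT G - (2 : ℂ) • 1) =
      (z ^ 2 + 1) • 1 - (2 * z) • quantumT G := by
    module
  rw [hCB, hM, det_smul_one_sub_smul_eq_prod_roots (IsAlgClosed.splits _), ← eval_charpoly_eq_det,
    charpoly_reversalMatrix, ← sub_sub_eq_add_sub, ← quantumU_eq, ← eval_charpoly_eq_det,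
    dart_card_eq_twice_card_edges, two_mul] at key
  simp only [eval_pow, eval_sub, eval_X, eval_one] at key
  have hprod : (quantumT G).charpoly.roots.map (fun μ => z ^ 2 - 2 * μ * z + 1) =
      (quantumT G).charpoly.roots.map fun μ => z ^ 2 + 1 - 2 * z * μ :=
    Multiset.map_congr rfl fun μ _ => by ring
  rw [hprod, ← key]
  ring

end QuantumWalk

theorem stmt3_general {V : Type*} [Fintype V] [DecidableEq V] (G : SimpleGraph V)
    [DecidableRel G.Adj] (hdeg : ∀ v : V, 1 ≤ G.degree v)
    (hmn : Fintype.card V ≤ G.edgeFinset.card) :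
    (quantumU G).charpoly =
      (X ^ 2 - 1) ^ (G.edgeFinset.card - Fintype.card V) *
        ((quantumT G).charpoly.roots.map
          (fun μ => X ^ 2 - C (2 * μ) * X + 1)).prod := by
  set m := G.edgeFinset.card
  set n := Fintype.card V
  have hX : (X ^ 2 - 1 : ℂ[X]) ^ (m + n) ≠ 0 := pow_ne_zero _ (X_pow_sub_C_ne_zero two_pos 1)
  refine mul_right_cancel₀ hX (Polynomial.funext fun z => ?_)
  simp only [eval_mul, eval_pow, eval_sub, eval_X, eval_one, eval_multiset_prod, Multiset.map_map,
    Function.comp_def, eval_add, eval_C]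
  rw [QuantumWalk.eval_charpoly_quantumU_mul G hdeg, show m + m = (m - n) + (m + n) by omega,
    pow_add]
  ring

theorem stmt3 {V : Type*} [Fintype V] [DecidableEq V] (G : SimpleGraph V)
    [DecidableRel G.Adj] (hconn : G.Connected) (hdeg : ∀ v : V, 1 ≤ G.degree v)
    (hmn : Fintype.card V ≤ G.edgeFinset.card) :
    (quantumU G).charpoly =
      (X ^ 2 - 1) ^ (G.edgeFinset.card - Fintype.card V) *
        ((quantumT G).charpoly.roots.map
          (fun μ => X ^ 2 - C (2 * μ) * X + 1)).prod :=
  stmt3_general G hdeg hmn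
end

section
/- Let G be a finite connected simple graph with n vertices and m edges, all of whose vertices have degree at least 1. If λ ∈ ℂ is an eigenvalue of the transition matrix U (i.e., λ is in the spectrum of U over ℂ), then λ = 1, or λ = −1, or there exists an eigenvalue μ of T(G) over ℂ such that λ² − 2μλ + 1 = 0. (Forward direction of Corollary 4.2.) -/
open Matrix SimpleGraph Polynomial

/-! Let `f` be an eigenvector of `U` for `λ` and let `g v` be the sum of `f` over the darts
entering `v`. The eigen-equation reads `λ f(e) + f(e⁻¹) = (2 / deg o(e)) g(o(e))`. If `g = 0`,
this equation for `e` and for `e⁻¹` forces `λ² = 1`. Otherwise, eliminating `f(e⁻¹)` between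
the two equations and summing over the darts entering `v` gives `(λ² + 1) g = 2λ Tᵀ g`, so `g`
is an eigenvector of `Tᵀ`, whose spectrum is that of `T`, for `μ = (λ² + 1) / (2λ)`. -/

namespace Matrix

variable {n K : Type*} [Fintype n] [DecidableEq n] [Field K]

theorem mem_spectrum_iff_exists_mulVec_eq_smul {A : Matrix n n K} {μ : K} :
    μ ∈ spectrum K A ↔ ∃ v ≠ 0, A *ᵥ v = μ • v := by
  rw [← spectrum_toLin', ← Module.End.hasEigenvalue_iff_mem_spectrum,
    Module.End.hasEigenvalue_iff, Submodule.ne_bot_iff]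
  simp only [Module.End.mem_eigenspace_iff, toLin'_apply]
  exact exists_congr fun v => and_comm

theorem spectrum_transpose (A : Matrix n n K) : spectrum K Aᵀ = spectrum K A := by
  ext μ
  rw [mem_spectrum_iff_isRoot_charpoly, mem_spectrum_iff_isRoot_charpoly, charpoly_transpose]

end Matrix

namespace SimpleGraph

open Finset

variable {V : Type*} [Fintype V] {G : SimpleGraph V} [DecidableRel G.Adj]

theorem quantumT_transpose_mulVec_apply (x : V → ℂ) (v : V) :
    ((quantumT G)ᵀ *ᵥ x) v = ∑ u ∈ G.neighborFinset v, x u / G.degree u := by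
  simp only [mulVec, dotProduct, transpose_apply, quantumT, ite_mul, zero_mul, sum_ite,
    sum_const_zero, add_zero, G.neighborFinset_eq_filter, G.adj_comm v]
  exact sum_congr rfl fun u _ => by ring

variable [DecidableEq V]

theorem sum_dart_snd_eq {M : Type*} [AddCommMonoid M] (φ : V → M) (v : V) :
    ∑ d : G.Dart with d.snd = v, φ d.fst = ∑ u ∈ G.neighborFinset v, φ u := by
  refine sum_bij (fun d _ => d.fst) ?_ ?_ ?_ fun _ _ => rfl
  · intro d hd
    simp only [mem_filter, mem_univ, true_and] at hd
    simpa [← hd] using d.adj.symm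
  · intro d₁ hd₁ d₂ hd₂ h
    simp only [mem_filter, mem_univ, true_and] at hd₁ hd₂
    exact Dart.ext _ _ (Prod.ext h (hd₁.trans hd₂.symm))
  · intro u hu
    exact ⟨⟨(u, v), (G.mem_neighborFinset v u).mp hu |>.symm⟩, by simp, rfl⟩

def inflow {M : Type*} [AddCommMonoid M] (f : G.Dart → M) (v : V) : M :=
  ∑ d : G.Dart with d.snd = v, f d

theorem inflow_eq_zero_of_degree_eq_zero {M : Type*} [AddCommMonoid M] (f : G.Dart → M) {v : V}
    (hv : G.degree v = 0) : inflow f v = 0 := by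
  refine sum_eq_zero fun d hd => absurd hv ?_
  simp only [mem_filter, mem_univ, true_and] at hd
  exact (G.degree_pos_iff_exists_adj v).mpr ⟨d.fst, hd ▸ d.adj.symm⟩ |>.ne'

theorem quantumU_apply (e d : G.Dart) :
    quantumU G e d =
      (if d.snd = e.fst then 2 / (G.degree e.fst : ℂ) else 0) - if d = e.symm then 1 else 0 := by
  unfold quantumU
  by_cases hd : d = e.symm
  · subst hd
    simp only [Dart.symm_toProd, Prod.snd_swap, ne_eq, not_true_eq_false, and_false, ↓reduceIte,
      sub_left_inj]
    rfl
  · by_cases h : d.snd = e.fst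
    · rw [if_pos ⟨h, hd⟩, if_pos h, if_neg hd, sub_zero, h]
    · simp [h, hd]

theorem quantumU_mulVec_apply (f : G.Dart → ℂ) (e : G.Dart) :
    (quantumU G *ᵥ f) e = 2 / (G.degree e.fst : ℂ) * inflow f e.fst - f e.symm := by
  simp only [mulVec, dotProduct, quantumU_apply, sub_mul, ite_mul, one_mul, zero_mul,
    sum_sub_distrib, sum_ite_eq', mem_univ, if_true, inflow, mul_sum, sum_ite, sum_const_zero,
    add_zero]

section Eigenvector

variable {f : G.Dart → ℂ} {lam : ℂ}

theorem mul_add_apply_symm_of_quantumU_mulVec (hf : quantumU G *ᵥ f = lam • f) (e : G.Dart) :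
    lam * f e + f e.symm = 2 / (G.degree e.fst : ℂ) * inflow f e.fst := by
  have he := congrFun hf e
  rw [quantumU_mulVec_apply, Pi.smul_apply, smul_eq_mul] at he
  linear_combination -he

theorem eq_one_or_eq_neg_one_of_inflow_eq_zero (hf : quantumU G *ᵥ f = lam • f) (hf0 : f ≠ 0)
    (hg : inflow f = 0) : lam = 1 ∨ lam = -1 := by
  obtain ⟨e, he⟩ := Function.ne_iff.mp hf0
  have h₁ := mul_add_apply_symm_of_quantumU_mulVec hf e
  have h₂ := mul_add_apply_symm_of_quantumU_mulVec hf e.symm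
  rw [Dart.symm_symm] at h₂
  simp only [hg, Pi.zero_apply, mul_zero] at h₁ h₂
  have hsq : (lam - 1) * (lam + 1) * f e = 0 := by linear_combination lam * h₁ - h₂
  exact (mul_eq_zero.mp ((mul_eq_zero.mp hsq).resolve_right he)).imp sub_eq_zero.mp
    eq_neg_of_add_eq_zero_left

theorem sq_add_one_mul_inflow_eq (hf : quantumU G *ᵥ f = lam • f) (v : V) :
    (lam ^ 2 + 1) * inflow f v = 2 * lam * ((quantumT G)ᵀ *ᵥ inflow f) v := by
  set c : V → ℂ := fun u => 2 / G.degree u * inflow f u with hc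
  have hdart (e : G.Dart) : (lam ^ 2 - 1) * f e = lam * c e.fst - c e.snd := by
    have h₂ : lam * f e.symm + f e = c e.snd := by
      have := mul_add_apply_symm_of_quantumU_mulVec hf e.symm
      rwa [Dart.symm_symm] at this
    linear_combination lam * mul_add_apply_symm_of_quantumU_mulVec hf e - h₂
  have hdeg_mul : (G.degree v : ℂ) * c v = 2 * inflow f v := by
    rcases eq_or_ne (G.degree v) 0 with h | h
    · simp [h, inflow_eq_zero_of_degree_eq_zero f h]
    · simp only [hc]
      field_simp
  have hT : ((quantumT G)ᵀ *ᵥ inflow f) v = (∑ u ∈ G.neighborFinset v, c u) / 2 := by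
    rw [quantumT_transpose_mulVec_apply, sum_div]
    exact sum_congr rfl fun u _ => by ring
  have hsum : (lam ^ 2 - 1) * inflow f v
      = lam * ∑ u ∈ G.neighborFinset v, c u - G.degree v * c v := by
    calc (lam ^ 2 - 1) * inflow f v = ∑ d : G.Dart with d.snd = v, (lam * c d.fst - c v) := by
          rw [inflow, mul_sum]
          exact sum_congr rfl fun d hd => by rw [hdart, (mem_filter.mp hd).2]
      _ = ∑ u ∈ G.neighborFinset v, (lam * c u - c v) :=
          sum_dart_snd_eq (fun u => lam * c u - c v) v
      _ = _ := by
          rw [sum_sub_distrib, mul_sum, sum_const, card_neighborFinset_eq_degree, nsmul_eq_mul]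
  rw [hT]
  linear_combination hsum - hdeg_mul

end Eigenvector

end SimpleGraph

theorem stmt4_general {V : Type*} [Fintype V] [DecidableEq V] (G : SimpleGraph V)
    [DecidableRel G.Adj]
    (lam : ℂ) (hlam : lam ∈ spectrum ℂ (quantumU G)) :
    lam = 1 ∨ lam = -1 ∨
      ∃ μ ∈ spectrum ℂ (quantumT G), lam ^ 2 - 2 * μ * lam + 1 = 0 := by
  obtain ⟨f, hf0, hf⟩ := mem_spectrum_iff_exists_mulVec_eq_smul.mp hlam
  by_cases hg : inflow f = 0
  · exact (eq_one_or_eq_neg_one_of_inflow_eq_zero hf hf0 hg).imp_right Or.inl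
  have hrel := sq_add_one_mul_inflow_eq hf
  have hlam0 : lam ≠ 0 := by
    rintro rfl
    exact hg (funext fun v => by simpa using hrel v)
  refine Or.inr (Or.inr ⟨(lam ^ 2 + 1) / (2 * lam), ?_, by field_simp; ring⟩)
  rw [← spectrum_transpose, mem_spectrum_iff_exists_mulVec_eq_smul]
  refine ⟨inflow f, hg, funext fun v => ?_⟩
  rw [Pi.smul_apply, smul_eq_mul]
  field_simp
  linear_combination (hrel v).symm

theorem stmt4 {V : Type*} [Fintype V] [DecidableEq V] (G : SimpleGraph V)
    [DecidableRel G.Adj] (hconn : G.Connected) (hdeg : ∀ v : V, 1 ≤ G.degree v)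
    (lam : ℂ) (hlam : lam ∈ spectrum ℂ (quantumU G)) :
    lam = 1 ∨ lam = -1 ∨
      ∃ μ ∈ spectrum ℂ (quantumT G), lam ^ 2 - 2 * μ * lam + 1 = 0 :=
  stmt4_general G lam hlam
end

section
/- Let G be a finite connected simple graph with n vertices and m edges, all of whose vertices have degree at least 1. If μ ∈ ℂ is an eigenvalue of T(G) and λ ∈ ℂ satisfies λ² − 2μλ + 1 = 0, then λ is an eigenvalue of the transition matrix U. (Backward direction of Corollary 4.2: every root of X² − 2μX + 1, i.e., λ = μ ± i√(1 − μ²), is an eigenvalue of U.) -/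
open Matrix SimpleGraph Polynomial

/-!
An eigenvector `φ` of `T(G)` for `μ` satisfies `∑_{w ~ u} φ w = deg u · μ · φ u`. For every dart
function `F`, `(U F) e` is twice the mean of `F` over the darts entering `o e`
minus `F e⁻¹`; hence `F f = φ (t f) - λ φ (o f)` satisfies `U F = λ F` because
`λ² - 2μλ + 1 = 0`. If this `F` vanishes, then `φ (t f) = λ φ (o f)` along every dart; going along
a dart out of a vertex where `φ ≠ 0` and back gives `λ² = 1`, hence `μ = λ`, and `f ↦ φ (o f)` is
an eigenvector for `λ` instead.
-/

theorem Matrix.mem_spectrum_iff_exists_mulVec_eq_smul_s5 {K n : Type*} [Field K] [Fintype n]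
    [DecidableEq n] (A : Matrix n n K) (μ : K) :
    μ ∈ spectrum K A ↔ ∃ v, v ≠ 0 ∧ A *ᵥ v = μ • v := by
  rw [← Matrix.spectrum_toLin', ← Module.End.hasEigenvalue_iff_mem_spectrum]
  constructor
  · intro h
    obtain ⟨v, hv, hv0⟩ := h.exists_hasEigenvector
    exact ⟨v, hv0, Module.End.mem_eigenspace_iff.mp hv⟩
  · rintro ⟨v, hv0, hv⟩
    exact Module.End.hasEigenvalue_of_hasEigenvector ⟨Module.End.mem_eigenspace_iff.mpr hv, hv0⟩

theorem SimpleGraph.sum_dart_snd_eq_sum_neighborFinset {V M : Type*} [Fintype V] [DecidableEq V]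
    [AddCommMonoid M] (G : SimpleGraph V) [DecidableRel G.Adj] (u : V) (k : V → M) :
    ∑ f : G.Dart with f.snd = u, k f.fst = ∑ w ∈ G.neighborFinset u, k w := by
  refine Finset.sum_bij' (fun f _ => f.fst)
    (fun w hw => ⟨(w, u), ((G.mem_neighborFinset u w).mp hw).symm⟩) ?_ ?_ ?_ ?_ ?_
  · rintro f hf
    rw [Finset.mem_filter] at hf
    exact (G.mem_neighborFinset _ _).mpr (hf.2 ▸ f.adj.symm)
  · simp
  · rintro f hf
    rw [Finset.mem_filter] at hf
    exact Dart.ext _ _ (Prod.ext rfl hf.2.symm)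
  all_goals intros; rfl

section QuantumWalk

variable {V : Type*} [Fintype V] {G : SimpleGraph V} [DecidableRel G.Adj]

theorem quantumT_mulVec_apply (φ : V → ℂ) (u : V) :
    (quantumT G *ᵥ φ) u = (∑ w ∈ G.neighborFinset u, φ w) / G.degree u := by
  simp only [mulVec, dotProduct, quantumT, ite_mul, zero_mul, ← Finset.sum_filter,
    ← neighborFinset_eq_filter, Finset.sum_div, one_div, inv_mul_eq_div]

theorem sum_neighborFinset_eq_of_quantumT_mulVec_eq_smul {φ : V → ℂ} {μ : ℂ}
    (hφ : quantumT G *ᵥ φ = μ • φ) (u : V) :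
    ∑ w ∈ G.neighborFinset u, φ w = G.degree u * μ * φ u := by
  rcases Nat.eq_zero_or_pos (G.degree u) with hu | hu
  · rw [Finset.card_eq_zero.mp hu]
    simp [hu]
  · have hu' := congrFun hφ u
    rw [quantumT_mulVec_apply, div_eq_iff (Nat.cast_ne_zero.mpr hu.ne')] at hu'
    simp only [Pi.smul_apply, smul_eq_mul] at hu'
    linear_combination hu'

theorem SimpleGraph.Dart.degree_fst_ne_zero (e : G.Dart) : (G.degree e.fst : ℂ) ≠ 0 :=
  Nat.cast_ne_zero.mpr ((G.degree_pos_iff_exists_adj _).mpr ⟨_, e.adj⟩).ne'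

variable [DecidableEq V]

theorem quantumU_mulVec_apply (h : V → V → ℂ) (e : G.Dart) :
    (quantumU G *ᵥ fun f => h f.fst f.snd) e =
      2 / G.degree e.fst * ∑ w ∈ G.neighborFinset e.fst, h w e.fst - h e.snd e.fst := by
  have hentry : ∀ f : G.Dart, quantumU G e f * h f.fst f.snd =
      (if f.snd = e.fst then 2 / G.degree e.fst * h f.fst e.fst else 0) -
        if f = e.symm then h e.snd e.fst else 0 := by
    intro f
    by_cases hf : f = e.symm
    · subst hf
      simp only [quantumU, ne_eq, not_true_eq_false, and_false, if_false, if_true]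
      change (2 / (G.degree e.fst : ℂ) - 1) * h e.snd e.fst =
        (if e.fst = e.fst then 2 / (G.degree e.fst : ℂ) * h e.snd e.fst else 0) - h e.snd e.fst
      rw [if_pos rfl]
      ring
    · by_cases hfe : f.snd = e.fst
      · obtain ⟨⟨a, b⟩, hab⟩ := f
        dsimp only at hfe
        subst hfe
        simp [quantumU, hf]
      · simp [quantumU, hf, hfe]
  simp only [mulVec, dotProduct, hentry, Finset.sum_sub_distrib, Finset.sum_ite_eq',
    Finset.mem_univ, if_true, ← Finset.sum_filter, ← Finset.mul_sum]
  rw [G.sum_dart_snd_eq_sum_neighborFinset e.fst (fun w => h w e.fst)]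

theorem quantumU_mulVec_snd_sub_mul_fst {φ : V → ℂ} {μ lam : ℂ}
    (hsum : ∀ u, ∑ w ∈ G.neighborFinset u, φ w = G.degree u * μ * φ u)
    (hlam : lam ^ 2 - 2 * μ * lam + 1 = 0) :
    quantumU G *ᵥ (fun f => φ f.snd - lam * φ f.fst) =
      lam • fun f => φ f.snd - lam * φ f.fst := by
  ext e
  have hdeg := e.degree_fst_ne_zero
  rw [quantumU_mulVec_apply (fun v w => φ w - lam * φ v), Finset.sum_sub_distrib,
    ← Finset.mul_sum, hsum, Finset.sum_const, card_neighborFinset_eq_degree, nsmul_eq_mul,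
    Pi.smul_apply, smul_eq_mul]
  field_simp
  linear_combination φ e.fst * hlam

theorem quantumU_mulVec_comp_fst {φ : V → ℂ} {lam : ℂ}
    (hsum : ∀ u, ∑ w ∈ G.neighborFinset u, φ w = G.degree u * lam * φ u)
    (hφ : ∀ f : G.Dart, φ f.snd = lam * φ f.fst) :
    quantumU G *ᵥ (fun f => φ f.fst) = lam • fun f => φ f.fst := by
  ext e
  have hdeg := e.degree_fst_ne_zero
  rw [quantumU_mulVec_apply (fun v _ => φ v), hsum, hφ, Pi.smul_apply, smul_eq_mul]
  field_simp
  ring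

end QuantumWalk

theorem stmt5_general {V : Type*} [Fintype V] [DecidableEq V] (G : SimpleGraph V)
    [DecidableRel G.Adj] (hdeg : ∀ v : V, 1 ≤ G.degree v)
    (μ : ℂ) (hμ : μ ∈ spectrum ℂ (quantumT G))
    (lam : ℂ) (hlam : lam ^ 2 - 2 * μ * lam + 1 = 0) :
    lam ∈ spectrum ℂ (quantumU G) := by
  obtain ⟨φ, hφ0, hφ⟩ := (mem_spectrum_iff_exists_mulVec_eq_smul_s5 _ _).mp hμ
  have hsum := sum_neighborFinset_eq_of_quantumT_mulVec_eq_smul hφ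
  rw [mem_spectrum_iff_exists_mulVec_eq_smul_s5]
  by_cases hgeom : ∀ f : G.Dart, φ f.snd = lam * φ f.fst
  · obtain ⟨d, hd⟩ : ∃ d : G.Dart, φ d.fst ≠ 0 := by
      obtain ⟨u, hu⟩ := Function.ne_iff.mp hφ0
      obtain ⟨w, huw⟩ := (G.degree_pos_iff_exists_adj u).mp (hdeg u)
      exact ⟨⟨(u, w), huw⟩, hu⟩
    have hsq : lam ^ 2 = 1 := by
      have hback : φ d.fst = lam * φ d.snd := hgeom d.symm
      refine mul_right_cancel₀ hd ?_
      linear_combination (-lam) * hgeom d - hback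
    have hμlam : μ = lam := by linear_combination (lam / 2 - μ) * hsq - lam / 2 * hlam
    subst hμlam
    exact ⟨_, fun h => hd (congrFun h d), quantumU_mulVec_comp_fst hsum hgeom⟩
  · push Not at hgeom
    obtain ⟨f, hf⟩ := hgeom
    exact ⟨_, fun h => hf (sub_eq_zero.mp (congrFun h f)),
      quantumU_mulVec_snd_sub_mul_fst hsum hlam⟩

theorem stmt5 {V : Type*} [Fintype V] [DecidableEq V] (G : SimpleGraph V)
    [DecidableRel G.Adj] (hconn : G.Connected) (hdeg : ∀ v : V, 1 ≤ G.degree v)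
    (μ : ℂ) (hμ : μ ∈ spectrum ℂ (quantumT G))
    (lam : ℂ) (hlam : lam ^ 2 - 2 * μ * lam + 1 = 0) :
    lam ∈ spectrum ℂ (quantumU G) :=
  stmt5_general G hdeg μ hμ lam hlam
end

section
/- (Ihara–Bass determinant formula.) Let G be a finite connected simple graph with n vertices and m edges. Then for every complex number t, (1 − t²)^n · det(I_{2m} − t·(B − J₀)) = (1 − t²)^m · det(I_n − t·A(G) + t²·(D − I_n)), where I_{2m} is the identity matrix indexed by darts and I_n the identity matrix indexed by vertices. (Theorem 3.1, with the factor (1−t²)^{r−1} = (1−t²)^{m−n} cleared of negative exponents.) -/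
open Matrix SimpleGraph Polynomial

/-- The matrix `B`: `B e f = 1` if `t e = o f`, else `0`. -/
def edgeB {V : Type*} (R : Type*) [Zero R] [One R] [DecidableEq V] (G : SimpleGraph V) :
    Matrix G.Dart G.Dart R :=
  fun e f => if e.toProd.2 = f.toProd.1 then 1 else 0

/-- The matrix `J₀`: `(J₀) e f = 1` if `f = e⁻¹`, else `0`. -/
def edgeJ {V : Type*} (R : Type*) [Zero R] [One R] [DecidableEq V] (G : SimpleGraph V) :
    Matrix G.Dart G.Dart R :=
  fun e f => if f = e.symm then 1 else 0

namespace IharaBassAux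

variable {V : Type*} [Fintype V] [DecidableEq V] (G : SimpleGraph V) [DecidableRel G.Adj]

/-- origin incidence matrix -/
def Sm : Matrix V G.Dart ℂ := fun v e => if e.toProd.1 = v then 1 else 0

/-- terminus incidence matrix -/
def Tm : Matrix V G.Dart ℂ := fun v e => if e.toProd.2 = v then 1 else 0

lemma edgeJ_mul_edgeJ : edgeJ ℂ G * edgeJ ℂ G = 1 := by
  ext e f
  simp only [Matrix.mul_apply, edgeJ, Matrix.one_apply, ite_mul, one_mul, zero_mul]
  rw [Finset.sum_eq_single e.symm]
  · simp only [SimpleGraph.Dart.symm_symm]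
    by_cases h : f = e
    · simp [h]
    · have h2 : ¬ (e = f) := fun hh => h hh.symm
      simp [h, h2]
  · intro b _ hb
    simp [fun h : b = e.symm => hb h]
  · simp

lemma edgeJ_transpose : (edgeJ ℂ G)ᵀ = edgeJ ℂ G := by
  ext e f
  simp only [Matrix.transpose_apply, edgeJ]
  by_cases h : e = f.symm
  · subst h; simp
  · have h2 : ¬ (f = e.symm) := by
      intro hh; exact h (by rw [hh, SimpleGraph.Dart.symm_symm])
    simp [h, h2]

lemma Sm_mul_edgeJ : Sm G * edgeJ ℂ G = Tm G := by
  ext v e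
  simp only [Matrix.mul_apply, edgeJ, Sm, Tm, mul_ite, mul_one, mul_zero]
  rw [Finset.sum_eq_single e.symm]
  · simp [SimpleGraph.Dart.symm_toProd]
  · intro b _ hb
    have : ¬ (e = b.symm) := by
      intro hh; exact hb (by rw [hh, SimpleGraph.Dart.symm_symm])
    simp [this]
  · simp

lemma Tm_transpose_mul_Sm : (Tm G)ᵀ * Sm G = edgeB ℂ G := by
  ext e f
  simp only [Matrix.mul_apply, Matrix.transpose_apply, Tm, Sm, edgeB, ite_mul, one_mul, zero_mul]
  rw [Finset.sum_eq_single e.toProd.2]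
  · simp [eq_comm]
  · intro b _ hb; rw [if_neg (fun h => hb h.symm)]
  · simp

lemma Sm_mul_Tm_transpose : Sm G * (Tm G)ᵀ = G.adjMatrix ℂ := by
  ext u v
  simp only [Matrix.mul_apply, Matrix.transpose_apply, Sm, Tm, SimpleGraph.adjMatrix_apply,
    ite_mul, one_mul, zero_mul, mul_ite, mul_one, mul_zero]
  by_cases h : G.Adj u v
  · rw [if_pos h, Finset.sum_eq_single (SimpleGraph.Dart.mk (u, v) h)]
    · simp
    · intro b _ hb
      by_cases h1 : b.toProd.1 = u
      · by_cases h2 : b.toProd.2 = v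
        · exact absurd (SimpleGraph.Dart.ext b _ (Prod.ext h1 h2)) hb
        · simp [h2]
      · simp [h1]
    · simp
  · rw [if_neg h]
    apply Finset.sum_eq_zero
    intro d _
    by_cases h1 : d.toProd.1 = u
    · by_cases h2 : d.toProd.2 = v
      · exact absurd (h1 ▸ h2 ▸ d.adj) h
      · simp [h2]
    · simp [h1]

lemma Sm_mul_Sm_transpose :
    Sm G * (Sm G)ᵀ = Matrix.diagonal (fun v => (G.degree v : ℂ)) := by
  ext u v
  simp only [Matrix.mul_apply, Matrix.transpose_apply, Sm, Matrix.diagonal_apply,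
    ite_mul, one_mul, zero_mul]
  by_cases h : u = v
  · subst h
    rw [if_pos rfl, ← SimpleGraph.dart_fst_fiber_card_eq_degree G u]
    rw [← Finset.sum_boole]
    apply Finset.sum_congr rfl
    intro d _
    by_cases h1 : d.toProd.1 = u <;> simp [h1, Prod.fst]
  · rw [if_neg h]
    apply Finset.sum_eq_zero
    intro d _
    by_cases h1 : d.toProd.1 = u
    · rw [if_pos h1, if_neg (h1 ▸ h)]
    · rw [if_neg h1]

lemma Tm_mul_Tm_transpose :
    Tm G * (Tm G)ᵀ = Matrix.diagonal (fun v => (G.degree v : ℂ)) := by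
  rw [← Sm_mul_edgeJ, Matrix.transpose_mul, edgeJ_transpose, ← Matrix.mul_assoc,
    Matrix.mul_assoc (Sm G), edgeJ_mul_edgeJ, Matrix.mul_one, Sm_mul_Sm_transpose]


lemma exists_dart_edge : ∀ (e : Sym2 V), e ∈ G.edgeSet → ∃ d : G.Dart, d.edge = e := by
  intro e
  induction e using Sym2.ind with
  | _ u v =>
    intro he
    exact ⟨SimpleGraph.Dart.mk (u, v) (G.mem_edgeSet.mp he), rfl⟩

noncomputable def pick (ε : G.edgeSet) : G.Dart := (exists_dart_edge G ε.1 ε.2).choose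

lemma pick_edge (ε : G.edgeSet) : (pick G ε).edge = ε.1 := (exists_dart_edge G ε.1 ε.2).choose_spec

/-- the pairing map `Bool × edgeSet → darts` -/
noncomputable def df (p : Bool × G.edgeSet) : G.Dart :=
  if p.1 then pick G p.2 else (pick G p.2).symm

lemma df_edge (p : Bool × G.edgeSet) : (df G p).edge = p.2.1 := by
  rcases p with ⟨b, ε⟩
  cases b <;> simp [df, pick_edge]

lemma df_symm (b : Bool) (ε : G.edgeSet) : (df G (b, ε)).symm = df G (!b, ε) := by
  cases b <;> simp [df]

lemma df_injective : Function.Injective (df G) := by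
  rintro ⟨b, ε⟩ ⟨b', ε'⟩ h
  have he : ε = ε' := by
    have := df_edge G (b, ε)
    rw [h, df_edge] at this
    exact Subtype.ext this.symm
  subst he
  have hb : b = b' := by
    by_contra hb
    have hb' : b' = !b := by cases b <;> cases b' <;> simp_all
    rw [hb', ← df_symm] at h
    exact (df G (b, ε)).symm_ne h.symm
  rw [hb]

lemma df_surjective : Function.Surjective (df G) := by
  intro d
  set ε : G.edgeSet := ⟨d.edge, d.edge_mem⟩ with hε
  have h := pick_edge G ε
  rcases (SimpleGraph.dart_edge_eq_iff (pick G ε) d).mp h with h1 | h1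
  · exact ⟨(true, ε), h1⟩
  · refine ⟨(false, ε), ?_⟩
    show (pick G ε).symm = d
    rw [h1, SimpleGraph.Dart.symm_symm]

noncomputable def dartEquiv : Bool × G.edgeSet ≃ G.Dart :=
  Equiv.ofBijective (df G) ⟨df_injective G, df_surjective G⟩

/-- the 2×2 block -/
def Mb (t : ℂ) : Matrix Bool Bool ℂ := fun b b' => if b = b' then 1 else t

lemma det_Mb (t : ℂ) : (Mb t).det = 1 - t ^ 2 := by
  rw [← Matrix.det_reindex_self finTwoEquiv.symm (Mb t)]
  rw [Matrix.det_fin_two]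
  simp [Mb, finTwoEquiv]
  ring

lemma reindex_one_add_smul_edgeJ (t : ℂ) :
    Matrix.reindex (dartEquiv G).symm (dartEquiv G).symm (1 + t • edgeJ ℂ G) =
      Matrix.blockDiagonal (fun _ : G.edgeSet => Mb t) := by
  ext ⟨b, ε⟩ ⟨b', ε'⟩
  simp only [Matrix.reindex_apply, Matrix.submatrix_apply, Equiv.symm_symm,
    Matrix.add_apply, Matrix.smul_apply, Matrix.one_apply, edgeJ,
    Matrix.blockDiagonal_apply, smul_eq_mul]
  have hde : ∀ b b' ε ε', dartEquiv G (b, ε) = dartEquiv G (b', ε') ↔ (b = b' ∧ ε = ε') := by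
    intro b b' ε ε'
    constructor
    · intro h
      have := df_injective G (by exact h)
      exact ⟨congrArg Prod.fst this, congrArg Prod.snd this⟩
    · rintro ⟨rfl, rfl⟩; rfl
  have hsy : (dartEquiv G (b', ε') = (dartEquiv G (b, ε)).symm) ↔ (b' = !b ∧ ε' = ε) := by
    have : (dartEquiv G (b, ε)).symm = dartEquiv G (!b, ε) := df_symm G b ε
    rw [this, hde]
  by_cases he : ε = ε'
  · subst he
    rw [if_pos rfl]
    cases b <;> cases b' <;> simp [hde, hsy, Mb]
  · rw [if_neg he]
    rw [if_neg (by rw [hde]; rintro ⟨-, h⟩; exact he h),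
      if_neg (by rw [hsy]; rintro ⟨-, h⟩; exact he h.symm)]
    simp

lemma det_one_add_smul_edgeJ (t : ℂ) :
    (1 + t • edgeJ ℂ G).det = (1 - t ^ 2) ^ G.edgeFinset.card := by
  rw [← Matrix.det_reindex_self (dartEquiv G).symm (1 + t • edgeJ ℂ G),
    reindex_one_add_smul_edgeJ, Matrix.det_blockDiagonal]
  simp [det_Mb, SimpleGraph.edgeFinset_card]

end IharaBassAux

open IharaBassAux

theorem stmt7 {V : Type*} [Fintype V] [DecidableEq V] (G : SimpleGraph V)
    [DecidableRel G.Adj] (hconn : G.Connected) (t : ℂ) :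
    (1 - t ^ 2) ^ (Fintype.card V) *
        ((1 : Matrix G.Dart G.Dart ℂ) - t • (edgeB ℂ G - edgeJ ℂ G)).det =
      (1 - t ^ 2) ^ G.edgeFinset.card *
        ((1 : Matrix V V ℂ) - t • G.adjMatrix ℂ +
          (t ^ 2) • ((Matrix.diagonal fun v => (G.degree v : ℂ)) - 1)).det := by
  classical
  haveI : Nonempty V := hconn.nonempty
  by_cases ht : (1 : ℂ) - t ^ 2 = 0
  · rw [ht, zero_pow Fintype.card_ne_zero, zero_mul]
    by_cases hm : G.edgeFinset.card = 0
    · have hnoadj : ∀ u v, ¬ G.Adj u v := by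
        intro u v h
        exact Finset.card_ne_zero_of_mem
          ((SimpleGraph.mem_edgeFinset).mpr ((G.mem_edgeSet).mpr h)) hm
      have hA : G.adjMatrix ℂ = 0 := by
        ext u v; simp [hnoadj u v]
      have hdeg : ∀ v, G.degree v = 0 := by
        intro v
        rw [← SimpleGraph.card_neighborFinset_eq_degree]
        refine Finset.card_eq_zero.mpr (Finset.eq_empty_of_forall_notMem ?_)
        intro u hu
        exact hnoadj v u ((SimpleGraph.mem_neighborFinset G v u).mp hu)
      have hdiag : (Matrix.diagonal fun v => (G.degree v : ℂ)) = 0 := by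
        rw [show (fun v => ((G.degree v : ℂ))) = fun _ => (0:ℂ) by funext v; rw [hdeg v]; simp]
        exact Matrix.diagonal_zero
      have hmat : (1 : Matrix V V ℂ) - t • G.adjMatrix ℂ +
          (t ^ 2) • ((Matrix.diagonal fun v => (G.degree v : ℂ)) - 1)
          = ((1:ℂ) - t ^ 2) • 1 := by
        rw [hA, hdiag, smul_zero, sub_zero, zero_sub, smul_neg, sub_smul, one_smul]
        abel
      rw [hm, pow_zero, one_mul, hmat, Matrix.det_smul, ht,
        zero_pow Fintype.card_ne_zero, zero_mul]
    · rw [zero_pow hm, zero_mul]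
  · -- main case
    have hmid : Sm G * ((1 : Matrix G.Dart G.Dart ℂ) - t • edgeJ ℂ G) * (Tm G)ᵀ
        = G.adjMatrix ℂ - t • Matrix.diagonal (fun v => (G.degree v : ℂ)) := by
      rw [Matrix.mul_sub, Matrix.mul_one, Matrix.mul_smul, Sm_mul_edgeJ, Matrix.sub_mul,
        Matrix.smul_mul, Sm_mul_Tm_transpose, Tm_mul_Tm_transpose]
    set c : ℂ := 1 - t ^ 2 with hc
    have hJJ : edgeJ ℂ G * edgeJ ℂ G = 1 := edgeJ_mul_edgeJ G
    have key0 : (1 + t • edgeJ ℂ G) * (1 - t • edgeJ ℂ G) = c • 1 := by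
      rw [mul_sub, mul_one, Matrix.mul_smul, add_mul, one_mul, Matrix.smul_mul, hJJ,
        smul_add, smul_smul, hc, sub_smul, one_smul, ← pow_two]
      abel
    have key0' : (1 - t • edgeJ ℂ G) * (1 + t • edgeJ ℂ G) = c • 1 := by
      rw [mul_add, mul_one, Matrix.mul_smul, sub_mul, one_mul, Matrix.smul_mul, hJJ,
        smul_sub, smul_smul, hc, sub_smul, one_smul, ← pow_two]
      abel
    haveI hInv : Invertible (1 + t • edgeJ ℂ G) := by
      refine ⟨c⁻¹ • (1 - t • edgeJ ℂ G), ?_, ?_⟩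
      · rw [Matrix.smul_mul, key0', smul_smul, inv_mul_cancel₀ ht, one_smul]
      · rw [Matrix.mul_smul, key0, smul_smul, inv_mul_cancel₀ ht, one_smul]
    have hinvOf : ⅟(1 + t • edgeJ ℂ G) = c⁻¹ • (1 - t • edgeJ ℂ G) :=
      invOf_eq_right_inv (by
        rw [Matrix.mul_smul, key0, smul_smul, inv_mul_cancel₀ ht, one_smul])
    have h22 : (Tm G)ᵀ * (t • Sm G) + 1 * (1 - t • (edgeB ℂ G - edgeJ ℂ G))
        = 1 + t • edgeJ ℂ G := by
      rw [one_mul, Matrix.mul_smul, Tm_transpose_mul_Sm, smul_sub]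
      abel
    have hN : Matrix.fromBlocks (c • (1 : Matrix V V ℂ)) (t • Sm G) (c • (Tm G)ᵀ)
          (1 + t • edgeJ ℂ G)
        = Matrix.fromBlocks 1 0 ((Tm G)ᵀ) 1 *
          Matrix.fromBlocks (c • (1 : Matrix V V ℂ)) (t • Sm G) 0
            (1 - t • (edgeB ℂ G - edgeJ ℂ G)) := by
      rw [Matrix.fromBlocks_multiply, h22]
      simp [Matrix.mul_smul]
    have hdet1 : (Matrix.fromBlocks (c • (1 : Matrix V V ℂ)) (t • Sm G) (c • (Tm G)ᵀ)
          (1 + t • edgeJ ℂ G)).det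
        = c ^ Fintype.card V * (1 - t • (edgeB ℂ G - edgeJ ℂ G)).det := by
      rw [hN, Matrix.det_mul, Matrix.det_fromBlocks_zero₁₂, Matrix.det_fromBlocks_zero₂₁,
        Matrix.det_smul]
      simp only [Matrix.det_one, one_mul, mul_one]
      try ring
    have hSchur : c • (1 : Matrix V V ℂ) -
          (t • Sm G) * ⅟(1 + t • edgeJ ℂ G) * (c • (Tm G)ᵀ)
        = (1 : Matrix V V ℂ) - t • G.adjMatrix ℂ +
          (t ^ 2) • ((Matrix.diagonal fun v => (G.degree v : ℂ)) - 1) := by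
      rw [hinvOf]
      rw [show (t • Sm G) * (c⁻¹ • (1 - t • edgeJ ℂ G)) * (c • (Tm G)ᵀ)
          = (t * c⁻¹ * c) • (Sm G * (1 - t • edgeJ ℂ G) * (Tm G)ᵀ) by
        simp only [Matrix.smul_mul, Matrix.mul_smul, smul_smul]
        congr 1
        ring]
      rw [show t * c⁻¹ * c = t by field_simp, hmid, smul_sub, smul_smul, ← pow_two,
        smul_sub, hc, sub_smul, one_smul]
      abel
    have hdet2 : (Matrix.fromBlocks (c • (1 : Matrix V V ℂ)) (t • Sm G) (c • (Tm G)ᵀ)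
          (1 + t • edgeJ ℂ G)).det
        = c ^ G.edgeFinset.card *
          ((1 : Matrix V V ℂ) - t • G.adjMatrix ℂ +
            (t ^ 2) • ((Matrix.diagonal fun v => (G.degree v : ℂ)) - 1)).det := by
      rw [Matrix.det_fromBlocks₂₂, hSchur, det_one_add_smul_edgeJ, ← hc]
    rw [← hdet1, hdet2]
end

section
/- (Determinant formula for the second weighted zeta function.) Let G be a finite connected simple graph with n vertices and m edges, and let w assign to each dart e of G a nonzero complex number w(e). Then for every complex number t, (1 − t²)^n · det(I_{2m} − t·(B_w − J₀)) = (1 − t²)^m · det(I_n − t·W(G) + t²·(D_w − I_n)). (Theorem 3.2, with the factor (1−t²)^{m−n} cleared of negative exponents.) -/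
/-!
All dart matrices factor through incidence matrices: with `L`, `M` the terminus and origin
incidence matrices and `K` the `w`-weighted origin incidence matrix, `B_w = L K`, `W(G) = K L`,
`D_w = K M`, `J₀ L = M` and `J₀² = 1`. As `(1 + tJ₀)(1 - tJ₀) = 1 - t²`, for `t ≠ ±1`
`1 - t(B_w - J₀) = (1 + tJ₀)(1 - X K)` with `X = (1 - t²)⁻¹(tL - t²M)`, and Sylvester's identity
`det(1 - X K) = det(1 - K X)` turns the dart determinant into a vertex determinant, since
`K(tL - t²M) = tW(G) - t²D_w`. Finally `det(1 + tJ₀) = (1 - t²)^m` because `J₀` swaps the two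
darts of each edge, and the points `t = ±1` follow by continuity.
-/

open Matrix SimpleGraph Polynomial

/-- The weighted matrix `B_w`: `(B_w) e f = w f` if `t e = o f`, else `0`. -/
def edgeBw {V : Type*} [DecidableEq V] (G : SimpleGraph V) (w : G.Dart → ℂ) :
    Matrix G.Dart G.Dart ℂ :=
  Matrix.of fun e f => if e.toProd.2 = f.toProd.1 then w f else 0

/-- The weighted matrix `W(G)`: `W u v = w (u,v)` if `(u,v)` is a dart, else `0`. -/
def weightedW {V : Type*} (G : SimpleGraph V) [DecidableRel G.Adj] (w : G.Dart → ℂ) :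
    Matrix V V ℂ :=
  Matrix.of fun u v => if h : G.Adj u v then w (SimpleGraph.Dart.mk (u, v) h) else 0

open Function Fintype

namespace Function.Involutive

variable {ι : Type*} {σ : ι → ι} {p : ι → Prop} [DecidablePred p]

/-- `p` selects one point of each orbit `{i, σ i}`; the second summand is mapped by `σ`. -/
def sumEquiv (hσ : Involutive σ) (hp : ∀ i, p (σ i) ↔ ¬ p i) :
    {i // p i} ⊕ {i // p i} ≃ ι :=
  (Equiv.sumCongr (Equiv.refl _)
    ((hσ.toPerm σ).subtypeEquiv fun i => iff_not_comm.mp (hp i))).trans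
    (Equiv.sumCompl p)

@[simp]
theorem sumEquiv_inl (hσ : Involutive σ) (hp : ∀ i, p (σ i) ↔ ¬ p i) (i : {i // p i}) :
    hσ.sumEquiv hp (Sum.inl i) = i :=
  rfl

@[simp]
theorem sumEquiv_inr (hσ : Involutive σ) (hp : ∀ i, p (σ i) ↔ ¬ p i) (i : {i // p i}) :
    hσ.sumEquiv hp (Sum.inr i) = σ i :=
  rfl

theorem card_eq_two_mul [Fintype ι] (hσ : Involutive σ) (hp : ∀ i, p (σ i) ↔ ¬ p i) :
    card ι = 2 * card {i // p i} := by
  rw [← card_congr (hσ.sumEquiv hp), card_sum, two_mul]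

end Function.Involutive

namespace Matrix

theorem det_one_add_smul_of_involutive {ι R : Type*} [Fintype ι] [DecidableEq ι]
    [CommRing R] {σ : ι → ι} (hσ : Involutive σ) {p : ι → Prop} [DecidablePred p]
    (hp : ∀ i, p (σ i) ↔ ¬ p i) (t : R) :
    (1 + t • of fun i j => if j = σ i then (1 : R) else 0).det =
      (1 - t ^ 2) ^ card {i // p i} := by
  rw [← det_submatrix_equiv_self (hσ.sumEquiv hp)]
  have hblocks : (1 + t • of fun i j => if j = σ i then (1 : R) else 0).submatrix
      (hσ.sumEquiv hp) (hσ.sumEquiv hp) = fromBlocks 1 (t • 1) (t • 1) 1 := by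
    have hne : ∀ a b, p a → p b → b ≠ σ a := fun a b ha hb hab => (hp a).mp (hab ▸ hb) ha
    ext (⟨a, ha⟩ | ⟨a, ha⟩) (⟨b, hb⟩ | ⟨b, hb⟩) <;>
      simp [one_apply, Subtype.ext_iff, hσ.injective.eq_iff, hσ _, hne, ha, hb,
        (hne _ _ ha hb).symm, eq_comm]
  have hschur : (1 : Matrix {i // p i} {i // p i} R) - t • 1 * t • 1 = (1 - t ^ 2) • 1 := by
    rw [smul_mul_smul, one_mul, sub_smul, one_smul, sq]
  rw [hblocks, det_fromBlocks_one₁₁, hschur, det_smul, det_one, mul_one]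

variable {m n : Type*} [Fintype m] [DecidableEq m] [Fintype n] [DecidableEq n]

theorem det_one_sub_smul_mul_sub_of_ne {F : Type*} [Field F] {J : Matrix m m F}
    {L M : Matrix m n F} (K : Matrix n m F) (hJ : J * J = 1) (hJL : J * L = M) {t : F}
    (ht : 1 - t ^ 2 ≠ 0) :
    (1 - t ^ 2) ^ card n * (1 - t • (L * K - J)).det =
      (1 + t • J).det * (1 - t • (K * L) + t ^ 2 • (K * M - 1)).det := by
  set X := (1 - t ^ 2)⁻¹ • (t • L - t ^ 2 • M)
  have hJX : (1 + t • J) * X = t • L := by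
    have h : (1 + t • J) * (t • L - t ^ 2 • M) = (1 - t ^ 2) • t • L := by
      rw [← hJL, Matrix.add_mul, Matrix.one_mul, smul_mul, Matrix.mul_sub, Matrix.mul_smul,
        Matrix.mul_smul, ← Matrix.mul_assoc, hJ, Matrix.one_mul]
      module
    rw [Matrix.mul_smul, h, smul_smul, inv_mul_cancel₀ ht, one_smul]
  have hdarts : 1 - t • (L * K - J) = (1 + t • J) * (1 - X * K) := by
    rw [Matrix.mul_sub, Matrix.mul_one, ← Matrix.mul_assoc, hJX, smul_mul]
    module
  have hvertices : 1 - t • (K * L) + t ^ 2 • (K * M - 1) = (1 - t ^ 2) • (1 - K * X) := by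
    rw [Matrix.mul_smul, smul_sub (1 - t ^ 2), smul_smul, mul_inv_cancel₀ ht, one_smul,
      Matrix.mul_sub, Matrix.mul_smul, Matrix.mul_smul]
    module
  rw [hdarts, hvertices, det_mul, det_one_sub_mul_comm, det_smul]
  ring

theorem det_one_sub_smul_mul_sub {J : Matrix m m ℂ} {L M : Matrix m n ℂ} (K : Matrix n m ℂ)
    (hJ : J * J = 1) (hJL : J * L = M) (t : ℂ) :
    (1 - t ^ 2) ^ card n * (1 - t • (L * K - J)).det =
      (1 + t • J).det * (1 - t • (K * L) + t ^ 2 • (K * M - 1)).det := by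
  have hdense : Dense {t : ℂ | 1 - t ^ 2 = 0}ᶜ := by
    refine Set.Countable.dense_compl ℂ (((Set.finite_singleton 1).insert (-1)).countable.mono ?_)
    intro t ht
    rw [Set.mem_ofPred_eq, sub_eq_zero, eq_comm, sq_eq_one_iff] at ht
    simpa [or_comm] using ht
  revert t
  refine funext_iff.mp (Continuous.ext_on hdense ?_ ?_ fun t ht => ?_)
  · fun_prop
  · fun_prop
  · exact det_one_sub_smul_mul_sub_of_ne K hJ hJL ht

end Matrix

namespace SimpleGraph

variable {V : Type*} [DecidableEq V]

def terminalIncidence (R : Type*) [Zero R] [One R] (G : SimpleGraph V) : Matrix G.Dart V R :=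
  of fun e v => if e.toProd.2 = v then 1 else 0

def originIncidence (R : Type*) [Zero R] [One R] (G : SimpleGraph V) : Matrix G.Dart V R :=
  of fun e v => if e.toProd.1 = v then 1 else 0

def weightedOriginIncidence {R : Type*} [Zero R] (G : SimpleGraph V) (w : G.Dart → R) :
    Matrix V G.Dart R :=
  of fun v e => if e.toProd.1 = v then w e else 0

variable [Fintype V] (G : SimpleGraph V) {R : Type*}

theorem edgeJ_mul_edgeJ [DecidableRel G.Adj] [NonAssocSemiring R] : edgeJ R G * edgeJ R G = 1 := by
  ext e f
  simp only [mul_apply, edgeJ, ite_mul, one_mul, zero_mul, Finset.sum_ite_eq', Finset.mem_univ,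
    if_true, Dart.symm_symm, one_apply, eq_comm]

theorem edgeJ_mul_terminalIncidence [DecidableRel G.Adj] [NonAssocSemiring R] :
    edgeJ R G * terminalIncidence R G = originIncidence R G := by
  ext e v
  simp only [mul_apply, edgeJ, terminalIncidence, originIncidence, of_apply, ite_mul, one_mul,
    zero_mul, Finset.sum_ite_eq', Finset.mem_univ, if_true, Dart.symm_toProd, Prod.snd_swap]

theorem terminalIncidence_mul_weightedOriginIncidence (w : G.Dart → ℂ) :
    terminalIncidence ℂ G * G.weightedOriginIncidence w = edgeBw G w := by
  ext e f
  rw [mul_apply]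
  simp [terminalIncidence, weightedOriginIncidence, edgeBw, eq_comm]

theorem weightedOriginIncidence_mul_originIncidence [DecidableRel G.Adj] [NonAssocSemiring R]
    (w : G.Dart → R) :
    G.weightedOriginIncidence w * originIncidence R G =
      diagonal fun v => ∑ e : G.Dart, if e.toProd.1 = v then w e else 0 := by
  ext u v
  rw [mul_apply]
  rcases eq_or_ne u v with rfl | huv
  · rw [diagonal_apply_eq]
    refine Finset.sum_congr rfl fun e _ => ?_
    simp only [weightedOriginIncidence, originIncidence, of_apply, mul_ite, mul_one, mul_zero]
    split_ifs <;> rfl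
  · refine (Finset.sum_eq_zero fun e _ => ?_).trans (diagonal_apply_ne _ huv).symm
    simp only [weightedOriginIncidence, originIncidence, of_apply, mul_ite, mul_one, mul_zero]
    split_ifs with hv hu
    exacts [absurd (hu.symm.trans hv) huv, rfl, rfl]

theorem weightedOriginIncidence_mul_terminalIncidence [DecidableRel G.Adj] (w : G.Dart → ℂ) :
    G.weightedOriginIncidence w * terminalIncidence ℂ G = weightedW G w := by
  ext u v
  simp only [mul_apply, weightedOriginIncidence, terminalIncidence, weightedW, of_apply, mul_ite,
    mul_one, mul_zero]
  by_cases huv : G.Adj u v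
  · rw [dif_pos huv, Finset.sum_eq_single ⟨(u, v), huv⟩ (fun e _ he => ?_) (by simp)]
    · simp
    split_ifs with hv hu
    exacts [absurd (Dart.ext _ _ (Prod.ext hu hv)) he, rfl, rfl]
  · refine (dif_neg huv).symm ▸ Finset.sum_eq_zero fun e _ => ?_
    split_ifs with hv hu
    exacts [absurd (hu ▸ hv ▸ e.adj) huv, rfl, rfl]

theorem det_one_add_smul_edgeJ [DecidableRel G.Adj] [CommRing R] (t : R) :
    (1 + t • edgeJ R G).det = (1 - t ^ 2) ^ G.edgeFinset.card := by
  let p : G.Dart → Prop := fun d => Fintype.equivFin V d.toProd.1 < Fintype.equivFin V d.toProd.2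
  have hp : ∀ d, p d.symm ↔ ¬ p d := fun d => by
    simp only [p, Dart.symm_toProd, Prod.fst_swap, Prod.snd_swap, not_lt]
    exact lt_iff_le_and_ne.trans (and_iff_left ((Fintype.equivFin V).injective.ne d.adj.ne.symm))
  have hcard :=
    (dart_card_eq_twice_card_edges G).symm.trans (Dart.symm_involutive.card_eq_two_mul hp)
  rw [Nat.eq_of_mul_eq_mul_left two_pos hcard]
  exact det_one_add_smul_of_involutive Dart.symm_involutive hp t

end SimpleGraph

theorem stmt8_general {V : Type*} [Fintype V] [DecidableEq V] (G : SimpleGraph V)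
    [DecidableRel G.Adj]
    (w : G.Dart → ℂ) (t : ℂ) :
    (1 - t ^ 2) ^ (Fintype.card V) *
        ((1 : Matrix G.Dart G.Dart ℂ) - t • (edgeBw G w - edgeJ ℂ G)).det =
      (1 - t ^ 2) ^ G.edgeFinset.card *
        ((1 : Matrix V V ℂ) - t • weightedW G w +
          (t ^ 2) • ((Matrix.diagonal fun v =>
            ∑ e : G.Dart, if e.toProd.1 = v then w e else 0) - 1)).det := by
  rw [← G.terminalIncidence_mul_weightedOriginIncidence w,
    ← G.weightedOriginIncidence_mul_terminalIncidence w,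
    ← G.weightedOriginIncidence_mul_originIncidence w, ← G.det_one_add_smul_edgeJ t]
  exact det_one_sub_smul_mul_sub _ G.edgeJ_mul_edgeJ G.edgeJ_mul_terminalIncidence t

theorem stmt8 {V : Type*} [Fintype V] [DecidableEq V] (G : SimpleGraph V)
    [DecidableRel G.Adj] (hconn : G.Connected)
    (w : G.Dart → ℂ) (hw : ∀ e : G.Dart, w e ≠ 0) (t : ℂ) :
    (1 - t ^ 2) ^ (Fintype.card V) *
        ((1 : Matrix G.Dart G.Dart ℂ) - t • (edgeBw G w - edgeJ ℂ G)).det =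
      (1 - t ^ 2) ^ G.edgeFinset.card *
        ((1 : Matrix V V ℂ) - t • weightedW G w +
          (t ^ 2) • ((Matrix.diagonal fun v =>
            ∑ e : G.Dart, if e.toProd.1 = v then w e else 0) - 1)).det :=
  stmt8_general G w t
end
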